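/- arXiv:0901.0929 — 5 statements merged into one kernel-verified Lean document; each statement's English description precedes it below -/
import Mathlib

section
/- Let p(z) = a₁z + a₂z² + … + a_nzⁿ be a real polynomial with zero constant term which is a bijection from ℝ to ℝ. If U₁, U₂ ∈ 𝒲 satisfy p(U₁) = p(U₂) almost everywhere on [0,1]² (where p is applied to a kernel via operator powers), then U₁ = U₂ almost everywhere; i.e., the map U ↦ p(U) is injective on 𝒲 up to almost-everywhere equality. -/
open MeasureTheory
open scoped Classical

noncomputable section

/-- The unit interval `[0,1]` as a subset of `ℝ`. -/
def I01 : Set ℝ := Set.Icc 0 1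

/-- The cube `[0,1]^n`. -/
def cube (n : ℕ) : Set (Fin n → ℝ) := Set.univ.pi fun _ => I01

/-- `W` belongs to `𝒲`: a bounded symmetric measurable function on `[0,1]²`. -/
def memW (W : ℝ → ℝ → ℝ) : Prop :=
  Measurable (Function.uncurry W) ∧
  (∀ x ∈ I01, ∀ y ∈ I01, W x y = W y x) ∧
  ∃ C : ℝ, ∀ x ∈ I01, ∀ y ∈ I01, |W x y| ≤ C

/-- `W` belongs to `𝒲₀`: a graphon, i.e. symmetric measurable with values in `[0,1]`. -/
def memW0 (W : ℝ → ℝ → ℝ) : Prop :=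
  Measurable (Function.uncurry W) ∧
  (∀ x ∈ I01, ∀ y ∈ I01, W x y = W y x) ∧
  ∀ x ∈ I01, ∀ y ∈ I01, W x y ∈ Set.Icc (0 : ℝ) 1

/-- Homomorphism density `t(F,W)` of a finite simple graph `F` in `W`. -/
def homDensity {n : ℕ} (F : SimpleGraph (Fin n)) (W : ℝ → ℝ → ℝ) : ℝ :=
  ∫ x in cube n,
    ∏ p ∈ Finset.univ.filter (fun p : Fin n × Fin n => p.1 < p.2 ∧ F.Adj p.1 p.2),
      W (x p.1) (x p.2)

/-- Two kernels are weakly isomorphic if all their homomorphism densities agree. -/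
def WeaklyIsomorphic (U W : ℝ → ℝ → ℝ) : Prop :=
  ∀ (n : ℕ) (F : SimpleGraph (Fin n)), homDensity F U = homDensity F W

/-- `W` is finitely forcible within the class `A`. -/
def FinitelyForcible (A : (ℝ → ℝ → ℝ) → Prop) (W : ℝ → ℝ → ℝ) : Prop :=
  A W ∧ ∃ (k : ℕ) (n : Fin k → ℕ) (F : ∀ i, SimpleGraph (Fin (n i))),
    ∀ U, A U → (∀ i, homDensity (F i) U = homDensity (F i) W) → WeaklyIsomorphic U W

/-- Density function `t^k(F,W)` of a `k`-labeled graph, as a function of the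
labeled variables; the graph has `k` labeled and `m` unlabeled vertices. -/
def labDensity {k m : ℕ} (F : SimpleGraph (Fin (k + m))) (W : ℝ → ℝ → ℝ)
    (x : Fin k → ℝ) : ℝ :=
  ∫ y in cube m,
    ∏ p ∈ Finset.univ.filter
        (fun p : Fin (k + m) × Fin (k + m) => p.1 < p.2 ∧ F.Adj p.1 p.2),
      W (Fin.append x y p.1) (Fin.append x y p.2)

/-- Kernel-operator product `(U∘V)(x,y) = ∫₀¹ U(x,z)V(z,y) dz`. -/
def kerMul (U V : ℝ → ℝ → ℝ) : ℝ → ℝ → ℝ :=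
  fun x y => ∫ z in I01, U x z * V z y

/-- `kerPow U i = U^{∘(i+1)}`, the `(i+1)`-st kernel-operator power of `U`. -/
def kerPow (U : ℝ → ℝ → ℝ) : ℕ → (ℝ → ℝ → ℝ)
  | 0 => U
  | i + 1 => kerMul (kerPow U i) U

/-- `p(U) = Σ_{i=1}^n a_i U^{∘i}` where `a i` is the coefficient of `z^{i+1}`. -/
def kerPoly (n : ℕ) (a : Fin n → ℝ) (U : ℝ → ℝ → ℝ) : ℝ → ℝ → ℝ :=
  fun x y => ∑ i, a i * kerPow U i x y

/-!
Extend `Uᵢ` by zero outside `[0,1]²` and regard it as a bounded integral operator `Tᵢ` on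
`L²([0,1]; ℂ)`. Symmetry of the kernel makes `Tᵢ` self-adjoint and the kernel product becomes
operator composition, so `p(Uᵢ)` is the kernel of `p(Tᵢ) = cfc p Tᵢ`. A continuous bijection `p`
of `ℝ` has a continuous inverse `g`, whence `Tᵢ = cfc g (cfc p Tᵢ)` and `T₁ = T₂`. Finally an
integral operator determines its kernel almost everywhere: pairing it with indicators recovers
the integrals of the kernel over rectangles, and rectangles generate the product σ-algebra.
-/

open scoped ComplexConjugate

lemma integral_norm_le_norm_Lp_two {α E : Type*} [MeasurableSpace α] {μ : Measure α}
    [IsProbabilityMeasure μ] [NormedAddCommGroup E] (f : Lp E 2 μ) :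
    ∫ x, ‖f x‖ ∂μ ≤ ‖f‖ := by
  have hf : Integrable f μ := (Lp.memLp f).integrable one_le_two
  rw [Lp.norm_def, integral_norm_eq_lintegral_enorm hf.aestronglyMeasurable,
    ← eLpNorm_one_eq_lintegral_enorm]
  exact ENNReal.toReal_mono (Lp.memLp f).eLpNorm_ne_top
    (eLpNorm_le_eLpNorm_of_exponent_le one_le_two (Lp.aestronglyMeasurable f))

lemma MeasureTheory.Lp.coeFn_finset_sum {α ι E : Type*} [MeasurableSpace α] {μ : Measure α}
    [NormedAddCommGroup E] {p : ENNReal} (s : Finset ι) (f : ι → Lp E p μ) :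
    ⇑(∑ i ∈ s, f i) =ᵐ[μ] ∑ i ∈ s, ⇑(f i) := by
  classical
  induction s using Finset.induction_on with
  | empty => simpa using Lp.coeFn_zero E p μ
  | insert i s hi ih =>
    simp only [Finset.sum_insert hi]
    exact (Lp.coeFn_add _ _).trans ih.add_left

lemma ae_eq_of_setIntegral_prod_eq {α β E : Type*} [MeasurableSpace α] [MeasurableSpace β]
    [NormedAddCommGroup E] [NormedSpace ℝ E] [CompleteSpace E] {μ : Measure (α × β)}
    {F G : α × β → E} (hF : Integrable F μ) (hG : Integrable G μ)
    (h : ∀ ⦃s : Set α⦄, MeasurableSet s → ∀ ⦃t : Set β⦄, MeasurableSet t →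
      ∫ p in s ×ˢ t, F p ∂μ = ∫ p in s ×ˢ t, G p ∂μ) :
    F =ᵐ[μ] G := by
  have h_univ : ∫ p, F p ∂μ = ∫ p, G p ∂μ := by
    simpa using h MeasurableSet.univ MeasurableSet.univ
  have h_all : ∀ S, MeasurableSet S → ∫ p in S, F p ∂μ = ∫ p in S, G p ∂μ := by
    intro S hS
    induction S, hS using MeasurableSpace.induction_on_inter generateFrom_prod.symm
      isPiSystem_prod with
    | empty => simp
    | basic _ hst =>
      obtain ⟨s, hs, t, ht, rfl⟩ := hst
      exact h hs ht
    | compl S hS hSFG =>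
      have hF' := integral_add_compl hS hF
      rw [hSFG, h_univ, ← integral_add_compl hS hG] at hF'
      exact add_left_cancel hF'
    | iUnion S hdisj hS hSFG =>
      rw [integral_iUnion hS hdisj hF.integrableOn, integral_iUnion hS hdisj hG.integrableOn]
      simp only [hSFG]
  exact hF.ae_eq_of_forall_setIntegral_eq F G hG fun S hS _ => h_all S hS

section BoundedKernel

variable {α : Type*} [MeasurableSpace α]

structure IsBoundedKernel (K : α → α → ℝ) : Prop where
  measurable : Measurable (Function.uncurry K)
  exists_bound : ∃ C, ∀ x y, |K x y| ≤ C

namespace IsBoundedKernel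

variable {K L : α → α → ℝ}

def bound (hK : IsBoundedKernel K) : ℝ := max hK.exists_bound.choose 0

lemma abs_le_bound (hK : IsBoundedKernel K) (x y : α) : |K x y| ≤ hK.bound :=
  le_max_of_le_left (hK.exists_bound.choose_spec x y)

lemma bound_nonneg (hK : IsBoundedKernel K) : 0 ≤ hK.bound := le_max_right _ _

lemma norm_ofReal_mul_le (hK : IsBoundedKernel K) (x y : α) (z : ℂ) :
    ‖(K x y : ℂ) * z‖ ≤ hK.bound * ‖z‖ := by
  rw [norm_mul, Complex.norm_real, Real.norm_eq_abs]
  exact mul_le_mul_of_nonneg_right (hK.abs_le_bound x y) (norm_nonneg z)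

lemma measurable_ofReal (hK : IsBoundedKernel K) :
    Measurable fun p : α × α => (K p.1 p.2 : ℂ) :=
  Complex.measurable_ofReal.comp hK.measurable

lemma integrable (hK : IsBoundedKernel K) (ν : Measure (α × α)) [IsFiniteMeasure ν] :
    Integrable (Function.uncurry K) ν :=
  .of_bound hK.measurable.aestronglyMeasurable hK.bound
    (.of_forall fun p => hK.abs_le_bound p.1 p.2)

lemma comp (μ : Measure α) [IsFiniteMeasure μ] (hK : IsBoundedKernel K)
    (hL : IsBoundedKernel L) : IsBoundedKernel fun x y => ∫ z, K x z * L z y ∂μ where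
  measurable := by
    have h : Measurable fun q : (α × α) × α => K q.1.1 q.2 * L q.2 q.1.2 :=
      (hK.measurable.comp (measurable_fst.fst.prodMk measurable_snd)).mul
        (hL.measurable.comp (measurable_snd.prodMk measurable_fst.snd))
    exact h.stronglyMeasurable.integral_prod_right'.measurable
  exists_bound := ⟨hK.bound * hL.bound * μ.real Set.univ, fun x y => by
    rw [← Real.norm_eq_abs]
    refine norm_integral_le_of_norm_le_const (.of_forall fun z => ?_)
    rw [norm_mul, Real.norm_eq_abs, Real.norm_eq_abs]
    exact mul_le_mul (hK.abs_le_bound x z) (hL.abs_le_bound z y) (abs_nonneg _) hK.bound_nonneg⟩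

lemma sum_mul {ι : Type*} {K : ι → α → α → ℝ} (hK : ∀ i, IsBoundedKernel (K i)) (c : ι → ℝ)
    (s : Finset ι) :
    IsBoundedKernel fun x y => ∑ i ∈ s, c i * K i x y where
  measurable := Finset.measurable_sum s fun i _ => measurable_const.mul (hK i).measurable
  exists_bound := ⟨∑ i ∈ s, |c i| * (hK i).bound, fun x y =>
    (Finset.abs_sum_le_sum_abs _ _).trans <| Finset.sum_le_sum fun i _ => by
      rw [abs_mul]
      exact mul_le_mul_of_nonneg_left ((hK i).abs_le_bound x y) (abs_nonneg _)⟩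

end IsBoundedKernel

end BoundedKernel

section IntegralOperator

variable {α : Type*} [MeasurableSpace α] {μ : Measure α} {K L : α → α → ℝ}

variable (μ) in
def kernelApply (K : α → α → ℝ) (f : α → ℂ) (x : α) : ℂ := ∫ y, (K x y : ℂ) * f y ∂μ

lemma IsBoundedKernel.integrable_ofReal_mul (hK : IsBoundedKernel K) {f : α → ℂ}
    (hf : Integrable f μ) (x : α) : Integrable (fun y => (K x y : ℂ) * f y) μ :=
  (hf.norm.const_mul hK.bound).mono'
    ((Complex.measurable_ofReal.comp hK.measurable.of_uncurry_left).aestronglyMeasurable.mul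
      hf.aestronglyMeasurable)
    (.of_forall fun y => hK.norm_ofReal_mul_le x y (f y))

lemma kernelApply_congr_ae {f g : α → ℂ} (h : f =ᵐ[μ] g) :
    kernelApply μ K f = kernelApply μ K g :=
  funext fun x => integral_congr_ae (h.mono fun y hy => by simp only [hy])

lemma kernelApply_add (hK : IsBoundedKernel K) {f g : α → ℂ} (hf : Integrable f μ)
    (hg : Integrable g μ) :
    kernelApply μ K (f + g) = kernelApply μ K f + kernelApply μ K g := by
  ext x
  simp only [kernelApply, Pi.add_apply, mul_add]
  exact integral_add (hK.integrable_ofReal_mul hf x) (hK.integrable_ofReal_mul hg x)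

lemma kernelApply_smul (c : ℂ) (f : α → ℂ) :
    kernelApply μ K (c • f) = c • kernelApply μ K f := by
  ext x
  simp only [kernelApply, Pi.smul_apply, smul_eq_mul, mul_left_comm _ c, integral_const_mul]

lemma norm_kernelApply_le [IsProbabilityMeasure μ] (hK : IsBoundedKernel K) (f : Lp ℂ 2 μ)
    (x : α) :
    ‖kernelApply μ K f x‖ ≤ hK.bound * ‖f‖ :=
  calc ‖kernelApply μ K f x‖ ≤ ∫ y, hK.bound * ‖f y‖ ∂μ :=
        norm_integral_le_of_norm_le
          (((Lp.memLp f).integrable one_le_two).norm.const_mul hK.bound)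
          (.of_forall fun y => hK.norm_ofReal_mul_le x y (f y))
    _ ≤ hK.bound * ‖f‖ := by
        rw [integral_const_mul]
        exact mul_le_mul_of_nonneg_left (integral_norm_le_norm_Lp_two f) hK.bound_nonneg

lemma memLp_kernelApply [IsProbabilityMeasure μ] (hK : IsBoundedKernel K) (f : Lp ℂ 2 μ) :
    MemLp (kernelApply μ K f) 2 μ :=
  .of_bound (hK.measurable_ofReal.aestronglyMeasurable.mul
      (Lp.aestronglyMeasurable f).comp_snd).integral_prod_right'
    _ (.of_forall (norm_kernelApply_le hK f))

variable (μ) in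
def integralOp [IsProbabilityMeasure μ] (hK : IsBoundedKernel K) : Lp ℂ 2 μ →L[ℂ] Lp ℂ 2 μ :=
  LinearMap.mkContinuous
    { toFun f := (memLp_kernelApply hK f).toLp
      map_add' f g := by
        rw [← MemLp.toLp_add]
        refine MemLp.toLp_congr _ _ (.of_eq ?_)
        rw [kernelApply_congr_ae (Lp.coeFn_add f g), kernelApply_add hK
          ((Lp.memLp f).integrable one_le_two) ((Lp.memLp g).integrable one_le_two)]
      map_smul' c f := by
        rw [RingHom.id_apply, ← MemLp.toLp_const_smul]
        refine MemLp.toLp_congr _ _ (.of_eq ?_)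
        rw [kernelApply_congr_ae (Lp.coeFn_smul c f), kernelApply_smul] }
    hK.bound fun f => by
      change ‖(memLp_kernelApply hK f).toLp‖ ≤ _
      refine (Lp.norm_le_of_ae_bound (mul_nonneg hK.bound_nonneg (norm_nonneg f)) ?_).trans_eq
        (by simp [measureUnivNNReal])
      filter_upwards [MemLp.coeFn_toLp (memLp_kernelApply hK f)] with x hx
      rw [hx]
      exact norm_kernelApply_le hK f x

lemma integralOp_coeFn [IsProbabilityMeasure μ] (hK : IsBoundedKernel K) (f : Lp ℂ 2 μ) :
    integralOp μ hK f =ᵐ[μ] kernelApply μ K f :=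
  MemLp.coeFn_toLp (memLp_kernelApply hK f)

lemma integralOp_congr [IsProbabilityMeasure μ] (hK : IsBoundedKernel K)
    (hL : IsBoundedKernel L) (h : Function.uncurry K =ᵐ[μ.prod μ] Function.uncurry L) :
    integralOp μ hK = integralOp μ hL := by
  ext f
  filter_upwards [integralOp_coeFn hK f, integralOp_coeFn hL f, Measure.ae_ae_of_ae_prod h]
    with x hKx hLx hx
  rw [hKx, hLx]
  exact integral_congr_ae (hx.mono fun y (hy : K x y = L x y) => by simp only [hy])

lemma IsBoundedKernel.integrable_ofReal_mul_prod (hK : IsBoundedKernel K) {f g : α → ℂ}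
    (hf : Integrable f μ) (hg : Integrable g μ) :
    Integrable (fun p : α × α => (K p.1 p.2 : ℂ) * (f p.1 * g p.2)) (μ.prod μ) :=
  ((hf.norm.mul_prod hg.norm).const_mul hK.bound).mono'
    (hK.measurable_ofReal.aestronglyMeasurable.mul
      (hf.aestronglyMeasurable.comp_fst.mul hg.aestronglyMeasurable.comp_snd))
    (.of_forall fun p => by
      simpa only [norm_mul, mul_assoc] using hK.norm_ofReal_mul_le p.1 p.2 (f p.1 * g p.2))

lemma kernelApply_comp [IsFiniteMeasure μ] (hK : IsBoundedKernel K) (hL : IsBoundedKernel L)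
    {f : α → ℂ} (hf : Integrable f μ) (x : α) :
    kernelApply μ (fun x y => ∫ z, K x z * L z y ∂μ) f x
      = kernelApply μ K (kernelApply μ L f) x := by
  have hKx : Integrable (fun z => (K x z : ℂ)) μ :=
    .of_bound (Complex.measurable_ofReal.comp hK.measurable.of_uncurry_left).aestronglyMeasurable
      hK.bound (.of_forall fun z => by simpa using hK.abs_le_bound x z)
  calc kernelApply μ (fun x y => ∫ z, K x z * L z y ∂μ) f x
      = ∫ y, ∫ z, (L z y : ℂ) * ((K x z : ℂ) * f y) ∂μ ∂μ := by
        refine integral_congr_ae (.of_forall fun y => ?_)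
        dsimp only
        rw [← integral_complex_ofReal, ← integral_mul_const]
        refine integral_congr_ae (.of_forall fun z => ?_)
        push_cast
        ring
    _ = ∫ z, ∫ y, (L z y : ℂ) * ((K x z : ℂ) * f y) ∂μ ∂μ :=
        (integral_integral_swap (hL.integrable_ofReal_mul_prod hKx hf)).symm
    _ = kernelApply μ K (kernelApply μ L f) x := by
        refine integral_congr_ae (.of_forall fun z => ?_)
        dsimp only [kernelApply]
        rw [← integral_const_mul]
        exact integral_congr_ae (.of_forall fun y => mul_left_comm _ _ _)

lemma integralOp_comp [IsProbabilityMeasure μ] (hK : IsBoundedKernel K)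
    (hL : IsBoundedKernel L) :
    integralOp μ (hK.comp μ hL) = integralOp μ hK * integralOp μ hL := by
  ext f
  filter_upwards [integralOp_coeFn (hK.comp μ hL) f,
    integralOp_coeFn hK (integralOp μ hL f)] with x hKL hK'
  rw [mul_apply_eq_comp, hKL, hK', kernelApply_congr_ae (integralOp_coeFn hL f)]
  exact kernelApply_comp hK hL ((Lp.memLp f).integrable one_le_two) x

lemma kernelApply_sum_mul {ι : Type*} {K : ι → α → α → ℝ} (hK : ∀ i, IsBoundedKernel (K i))
    (c : ι → ℝ) (s : Finset ι) {f : α → ℂ} (hf : Integrable f μ) :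
    kernelApply μ (fun x y => ∑ i ∈ s, c i * K i x y) f
      = ∑ i ∈ s, c i • kernelApply μ (K i) f := by
  ext x
  simp only [kernelApply, Finset.sum_apply, Pi.smul_apply, ← integral_smul]
  rw [← integral_finsetSum (f := fun i y => c i • ((K i x y : ℂ) * f y)) s
    fun i _ => ((hK i).integrable_ofReal_mul hf x).smul (c i)]
  refine integral_congr_ae (.of_forall fun y => ?_)
  simp only [Complex.real_smul]
  push_cast
  rw [Finset.sum_mul]
  exact Finset.sum_congr rfl fun i _ => mul_assoc _ _ _

lemma integralOp_sum_mul [IsProbabilityMeasure μ] {ι : Type*} {K : ι → α → α → ℝ}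
    (hK : ∀ i, IsBoundedKernel (K i)) (c : ι → ℝ) (s : Finset ι) :
    integralOp μ (IsBoundedKernel.sum_mul hK c s) = ∑ i ∈ s, c i • integralOp μ (hK i) := by
  ext f
  filter_upwards [integralOp_coeFn (IsBoundedKernel.sum_mul hK c s) f,
    Lp.coeFn_finset_sum s fun i => c i • integralOp μ (hK i) f,
    (Filter.eventually_all_finset s).2 fun i _ => Lp.coeFn_smul (c i) (integralOp μ (hK i) f),
    (Filter.eventually_all_finset s).2 fun i _ => integralOp_coeFn (hK i) f]
    with x h_sum h_coe h_smul h_op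
  simp only [sum_apply, smul_apply]
  rw [h_sum, h_coe, kernelApply_sum_mul hK c s ((Lp.memLp f).integrable one_le_two)]
  simp only [Finset.sum_apply]
  exact Finset.sum_congr rfl fun i hi => by simp only [h_smul i hi, h_op i hi, Pi.smul_apply]

lemma isSelfAdjoint_integralOp [IsProbabilityMeasure μ] (hK : IsBoundedKernel K)
    (hsymm : ∀ x y, K x y = K y x) :
    IsSelfAdjoint (integralOp μ hK) := by
  rw [ContinuousLinearMap.isSelfAdjoint_iff_isSymmetric]
  intro f g
  have hf : Integrable f μ := (Lp.memLp f).integrable one_le_two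
  have hg : Integrable g μ := (Lp.memLp g).integrable one_le_two
  have hf_conj : Integrable (fun y => conj (f y)) μ :=
    Complex.conjCLE.toContinuousLinearMap.integrable_comp hf
  simp only [ContinuousLinearMap.coe_coe, L2.inner_def, RCLike.inner_apply]
  calc ∫ x, g x * conj (integralOp μ hK f x) ∂μ
      = ∫ x, ∫ y, (K x y : ℂ) * (g x * conj (f y)) ∂μ ∂μ := by
        refine integral_congr_ae ?_
        filter_upwards [integralOp_coeFn hK f] with x hx
        rw [hx, kernelApply, ← integral_conj, ← integral_const_mul]
        refine integral_congr_ae (.of_forall fun y => ?_)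
        simp only [map_mul, Complex.conj_ofReal]
        ring
    _ = ∫ y, ∫ x, (K x y : ℂ) * (g x * conj (f y)) ∂μ ∂μ :=
        integral_integral_swap (hK.integrable_ofReal_mul_prod hg hf_conj :)
    _ = ∫ y, integralOp μ hK g y * conj (f y) ∂μ := by
        refine integral_congr_ae ?_
        filter_upwards [integralOp_coeFn hK g] with y hy
        rw [hy, kernelApply, ← integral_mul_const]
        refine integral_congr_ae (.of_forall fun x => ?_)
        simp only [hsymm x y]
        ring

lemma ofReal_setIntegral_prod_eq [IsProbabilityMeasure μ] (hK : IsBoundedKernel K) (s : Set α)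
    {t : Set α} (ht : MeasurableSet t) :
    ((∫ p in s ×ˢ t, Function.uncurry K p ∂μ.prod μ : ℝ) : ℂ)
      = ∫ x in s, integralOp μ hK (indicatorConstLp 2 ht (measure_ne_top μ t) 1) x ∂μ := by
  have h_apply : kernelApply μ K (indicatorConstLp 2 ht (measure_ne_top μ t) (1 : ℂ))
      = fun x => ∫ y in t, (K x y : ℂ) ∂μ := by
    rw [kernelApply_congr_ae indicatorConstLp_coeFn]
    ext x
    rw [kernelApply, ← integral_indicator ht]
    congr 1 with y
    by_cases hy : y ∈ t <;> simp [hy]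
  rw [← Measure.prod_restrict, integral_prod _ (hK.integrable _),
    integral_congr_ae (ae_restrict_of_ae (integralOp_coeFn hK _)), h_apply,
    ← integral_complex_ofReal]
  simp only [Function.uncurry_apply_pair, integral_complex_ofReal]

lemma ae_eq_of_integralOp_eq [IsProbabilityMeasure μ] (hK : IsBoundedKernel K)
    (hL : IsBoundedKernel L) (h : integralOp μ hK = integralOp μ hL) :
    Function.uncurry K =ᵐ[μ.prod μ] Function.uncurry L :=
  ae_eq_of_setIntegral_prod_eq (hK.integrable _) (hL.integrable _) fun s _ t ht => by
    have h_rect := ofReal_setIntegral_prod_eq (μ := μ) hK s ht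
    rw [h, ← ofReal_setIntegral_prod_eq hL s ht] at h_rect
    exact_mod_cast h_rect

end IntegralOperator

lemma exists_continuous_leftInverse_of_bijective {q : ℝ → ℝ} (hq : Continuous q)
    (hbij : q.Bijective) : ∃ g : ℝ → ℝ, Continuous g ∧ Function.LeftInverse g q := by
  rcases hq.strictMono_of_inj hbij.1 with hmono | hanti
  · let e := hmono.orderIsoOfSurjective q hbij.2
    exact ⟨e.symm, e.symm.continuous, e.symm_apply_apply⟩
  · let e := hanti.dual_right.orderIsoOfSurjective _ hbij.2
    exact ⟨e.symm ∘ OrderDual.toDual, e.symm.continuous.comp continuous_toDual,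
      e.symm_apply_apply⟩

section ContinuousFunctionalCalculus

variable {A : Type*} [CStarAlgebra A]

lemma IsSelfAdjoint.eq_of_cfc_eq {q g : ℝ → ℝ} (hq : Continuous q) (hg : Continuous g)
    (hgq : Function.LeftInverse g q) {a b : A} (ha : IsSelfAdjoint a) (hb : IsSelfAdjoint b)
    (h : cfc q a = cfc q b) : a = b := by
  have h_inv : ∀ x : A, IsSelfAdjoint x → cfc g (cfc q x) = x := fun x hx => by
    rw [← cfc_comp g q x hx hg.continuousOn hq.continuousOn, hgq.comp_eq_id, cfc_id ℝ x hx]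
  rw [← h_inv a ha, h, h_inv b hb]

lemma cfc_sum_mul_pow {ι : Type*} (s : Finset ι) (c : ι → ℝ) (e : ι → ℕ) {a : A}
    (ha : IsSelfAdjoint a) :
    cfc (fun t : ℝ => ∑ i ∈ s, c i * t ^ e i) a = ∑ i ∈ s, c i • a ^ e i := by
  rw [← Finset.sum_fn, cfc_sum _ a s fun i _ => by fun_prop]
  refine Finset.sum_congr rfl fun i _ => ?_
  change cfc (fun t : ℝ => c i • t ^ e i) a = _
  rw [cfc_smul (c i) (· ^ e i) a, cfc_pow_id a (e i) ha]

end ContinuousFunctionalCalculus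

instance : IsProbabilityMeasure (volume.restrict I01) :=
  ⟨by simp [I01]⟩

lemma volume_restrict_I01_prod_I01 :
    volume.restrict (I01 ×ˢ I01) = (volume.restrict I01).prod (volume.restrict I01) := by
  rw [Measure.volume_eq_prod, Measure.prod_restrict]

section KernelPolynomial

variable {K : ℝ → ℝ → ℝ}

lemma IsBoundedKernel.kerPow (hK : IsBoundedKernel K) : ∀ i, IsBoundedKernel (kerPow K i)
  | 0 => hK
  | i + 1 => (hK.kerPow i).comp _ hK

lemma integralOp_kerPow (hK : IsBoundedKernel K) : ∀ i,
    integralOp (volume.restrict I01) (hK.kerPow i) = integralOp (volume.restrict I01) hK ^ (i + 1)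
  | 0 => (pow_one _).symm
  | i + 1 => by
    rw [pow_succ, ← integralOp_kerPow hK i]
    exact integralOp_comp (hK.kerPow i) hK

lemma IsBoundedKernel.kerPoly (hK : IsBoundedKernel K) (n : ℕ) (a : Fin n → ℝ) :
    IsBoundedKernel (kerPoly n a K) :=
  .sum_mul (fun i : Fin n => hK.kerPow i) a Finset.univ

lemma integralOp_kerPoly (hK : IsBoundedKernel K) (n : ℕ) (a : Fin n → ℝ) :
    integralOp (volume.restrict I01) (hK.kerPoly n a)
      = ∑ i, a i • integralOp (volume.restrict I01) hK ^ ((i : ℕ) + 1) := by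
  simp only [← integralOp_kerPow hK]
  exact integralOp_sum_mul (fun i : Fin n => hK.kerPow i) a Finset.univ

end KernelPolynomial

section Truncation

variable {U : ℝ → ℝ → ℝ}

/-- `memW` bounds `U` only on `[0,1]²`, which is also the only part of `U` that `kerMul` reads;
cutting `U` off outside the square gives a globally bounded kernel with the same powers there. -/
def truncate (U : ℝ → ℝ → ℝ) (x y : ℝ) : ℝ :=
  (I01 ×ˢ I01).indicator (Function.uncurry U) (x, y)

lemma truncate_eq {x y : ℝ} (hx : x ∈ I01) (hy : y ∈ I01) : truncate U x y = U x y :=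
  Set.indicator_of_mem (Set.mk_mem_prod hx hy) _

lemma memW.truncate_symm (hU : memW U) (x y : ℝ) : truncate U x y = truncate U y x := by
  by_cases hxy : x ∈ I01 ∧ y ∈ I01
  · rw [truncate_eq hxy.1 hxy.2, truncate_eq hxy.2 hxy.1, hU.2.1 x hxy.1 y hxy.2]
  · rw [truncate, truncate, Set.indicator_of_notMem, Set.indicator_of_notMem]
    · exact fun h => hxy ⟨h.2, h.1⟩
    · exact fun h => hxy h

lemma memW.isBoundedKernel_truncate (hU : memW U) : IsBoundedKernel (truncate U) where
  measurable := hU.1.indicator (measurableSet_Icc.prod measurableSet_Icc)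
  exists_bound := by
    obtain ⟨C, hC⟩ := hU.2.2
    refine ⟨max C 0, fun x y => ?_⟩
    by_cases hxy : x ∈ I01 ∧ y ∈ I01
    · rw [truncate_eq hxy.1 hxy.2]
      exact (hC x hxy.1 y hxy.2).trans (le_max_left _ _)
    · rw [truncate, Set.indicator_of_notMem (show (x, y) ∉ I01 ×ˢ I01 from fun h => hxy h)]
      simp

lemma kerPow_truncate {x y : ℝ} (hx : x ∈ I01) (hy : y ∈ I01) :
    ∀ i, kerPow (truncate U) i x y = kerPow U i x y
  | 0 => truncate_eq hx hy
  | i + 1 => setIntegral_congr_fun measurableSet_Icc fun z hz => by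
    simp only [kerPow_truncate hx hz i, truncate_eq hz hy]

lemma kerPoly_truncate {x y : ℝ} (hx : x ∈ I01) (hy : y ∈ I01) (n : ℕ) (a : Fin n → ℝ) :
    kerPoly n a (truncate U) x y = kerPoly n a U x y :=
  Finset.sum_congr rfl fun i _ => by rw [kerPow_truncate hx hy]

end Truncation

/-- if `p` is a real polynomial with zero constant term which is a
bijection of `ℝ`, then `U ↦ p(U)` (kernel-operator substitution) is injective on `𝒲`
up to a.e. equality on `[0,1]²`. -/
theorem statement3 (n : ℕ) (a : Fin n → ℝ)
    (hbij : Function.Bijective fun t : ℝ => ∑ i, a i * t ^ ((i : ℕ) + 1))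
    (U₁ U₂ : ℝ → ℝ → ℝ) (h₁ : memW U₁) (h₂ : memW U₂)
    (heq : ∀ᵐ p : ℝ × ℝ ∂(volume.restrict (I01 ×ˢ I01)),
      kerPoly n a U₁ p.1 p.2 = kerPoly n a U₂ p.1 p.2) :
    ∀ᵐ p : ℝ × ℝ ∂(volume.restrict (I01 ×ˢ I01)), U₁ p.1 p.2 = U₂ p.1 p.2 := by
  have hV₁ := h₁.isBoundedKernel_truncate
  have hV₂ := h₂.isBoundedKernel_truncate
  have h_sq : ∀ᵐ p : ℝ × ℝ ∂(volume.restrict (I01 ×ˢ I01)), p ∈ I01 ×ˢ I01 :=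
    ae_restrict_mem (measurableSet_Icc.prod measurableSet_Icc)
  rw [volume_restrict_I01_prod_I01] at heq h_sq ⊢
  have h_poly : integralOp (volume.restrict I01) (hV₁.kerPoly n a)
      = integralOp (volume.restrict I01) (hV₂.kerPoly n a) := by
    refine integralOp_congr _ _ ?_
    filter_upwards [heq, h_sq] with p hp hmem
    simpa only [Function.uncurry, kerPoly_truncate hmem.1 hmem.2] using hp
  rw [integralOp_kerPoly hV₁, integralOp_kerPoly hV₂] at h_poly
  have hT₁ := isSelfAdjoint_integralOp (μ := volume.restrict I01) hV₁ h₁.truncate_symm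
  have hT₂ := isSelfAdjoint_integralOp (μ := volume.restrict I01) hV₂ h₂.truncate_symm
  obtain ⟨g, hg, hgq⟩ := exists_continuous_leftInverse_of_bijective (by fun_prop) hbij
  have h_op : integralOp (volume.restrict I01) hV₁ = integralOp (volume.restrict I01) hV₂ :=
    hT₁.eq_of_cfc_eq (by fun_prop) hg hgq hT₂ <| by
      rwa [cfc_sum_mul_pow _ _ _ hT₁, cfc_sum_mul_pow _ _ _ hT₂]
  filter_upwards [ae_eq_of_integralOp_eq hV₁ hV₂ h_op, h_sq] with p hp hmem
  simpa only [Function.uncurry, truncate_eq hmem.1 hmem.2] using hp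
end
end

section
/- Let G be a finite simple graph on n vertices that contains no induced path on four vertices, let d ∈ [0,1] and ε ≥ 0, and suppose that |deg(v)/n − d| ≤ ε for every vertex v of G. If G is disconnected, then every connected component of G has at most n(2/3 + (4/3)ε) vertices. -/
open MeasureTheory
open scoped Classical

noncomputable section

/-!
A connected cograph with at least two vertices has an edge `uv` whose two neighbourhoods cover
it. Among the edges of the component take one maximising `|N(u) ∪ N(v)|`. If some vertex of the
component lies outside `N(u) ∪ N(v)`, a walk to it crosses an edge `x w'` with
`x ∈ N(u) ∪ N(v)` and `w' ∉ N(u) ∪ N(v)`. Freedom from induced `P₄`s (`v u x w'`, `u v x w'`)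
forces `x ∈ N(u) ∩ N(v)`, and then (`u v y w'`, `w' x v y`) every neighbour `y` of `v` outside
`N(u)` is a neighbour of `x`, so the edge `ux` has the strictly larger union `N(u) ∪ N(x) ∋ w'`.

Hence a component `C` with an edge has `|C| ≤ deg u + deg v ≤ 2n(d + ε)`, while a vertex `z`
outside `C` has no neighbour in `C`, so `|C| ≤ n - deg z ≤ n(1 - d + ε)`. Adding twice the second
bound to the first gives `3|C| ≤ n(2 + 4ε)`.
-/

open Finset

namespace SimpleGraph

variable {V : Type*} {G : SimpleGraph V}

/-- Every path `a b c d` has a chord; paths with repeated vertices satisfy this trivially. -/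
def IsP4Free (G : SimpleGraph V) : Prop :=
  ∀ ⦃a b c d : V⦄, G.Adj a b → G.Adj b c → G.Adj c d → G.Adj a c ∨ G.Adj b d ∨ G.Adj a d

lemma isP4Free_of_not_exists
    (h : ¬ ∃ a b c d : V, a ≠ b ∧ a ≠ c ∧ a ≠ d ∧ b ≠ c ∧ b ≠ d ∧ c ≠ d ∧
      G.Adj a b ∧ G.Adj b c ∧ G.Adj c d ∧ ¬ G.Adj a c ∧ ¬ G.Adj b d ∧ ¬ G.Adj a d) :
    G.IsP4Free := by
  intro a b c d hab hbc hcd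
  by_contra! ⟨hac, hbd, had⟩
  refine h ⟨a, b, c, d, hab.ne, ?_, ?_, hbc.ne, ?_, hcd.ne, hab, hbc, hcd, hac, hbd, had⟩
  · rintro rfl; exact had hcd
  · rintro rfl; exact hac hcd.symm
  · rintro rfl; exact had hab

namespace IsP4Free

variable (hG : G.IsP4Free) {u v w x : V}
include hG

lemma adj_and_adj_of_adj_outside (huv : G.Adj u v) (hx : G.Adj u x ∨ G.Adj v x)
    (hxw : G.Adj x w) (huw : ¬ G.Adj u w) (hvw : ¬ G.Adj v w) : G.Adj u x ∧ G.Adj v x := by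
  rcases hx with hux | hvx
  · refine ⟨hux, by_contra fun hvx => ?_⟩
    rcases hG huv.symm hux hxw with h | h | h <;> contradiction
  · refine ⟨by_contra fun hux => ?_, hvx⟩
    rcases hG huv hvx hxw with h | h | h <;> contradiction

variable [Fintype V] [DecidableEq V] [DecidableRel G.Adj]

lemma neighborFinset_union_ssubset (huv : G.Adj u v) (hvx : G.Adj v x)
    (hxw : G.Adj x w) (huw : ¬ G.Adj u w) (hvw : ¬ G.Adj v w) :
    G.neighborFinset u ∪ G.neighborFinset v ⊂ G.neighborFinset u ∪ G.neighborFinset x := by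
  have hsub : G.neighborFinset u ∪ G.neighborFinset v ⊆
      G.neighborFinset u ∪ G.neighborFinset x := by
    intro y
    simp only [mem_union, mem_neighborFinset]
    refine fun hy => or_iff_not_imp_left.2 fun huy => ?_
    have hvy := hy.resolve_left huy
    have hyw : ¬ G.Adj y w := fun hyw => by
      rcases hG huv hvy hyw with h | h | h <;> contradiction
    rcases hG hxw.symm hvx.symm hvy with h | h | h
    · exact absurd h.symm hvw
    · exact h
    · exact absurd h.symm hyw
  refine (ssubset_iff_of_subset hsub).2 ⟨w, ?_, ?_⟩
  · simp [hxw]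
  · simp [huw, hvw]

theorem exists_adj_forall_mem_supp {c : G.ConnectedComponent} {a b : V} (hab : G.Adj a b)
    (ha : a ∈ c.supp) : ∃ u v, G.Adj u v ∧ ∀ w ∈ c.supp, G.Adj u w ∨ G.Adj v w := by
  let edges := univ.filter fun p : V × V => G.Adj p.1 p.2 ∧ p.1 ∈ c.supp
  obtain ⟨⟨u, v⟩, huv, hmax⟩ := edges.exists_max_image
    (fun p => #(G.neighborFinset p.1 ∪ G.neighborFinset p.2))
    ⟨(a, b), mem_filter.2 ⟨mem_univ _, hab, ha⟩⟩
  obtain ⟨-, huv, hu⟩ := mem_filter.1 huv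
  refine ⟨u, v, huv, fun w hw => ?_⟩
  by_contra! ⟨huw, hvw⟩
  obtain ⟨⟨⟨x, w'⟩, hxw'⟩, -, hx, hw'⟩ :=
    (c.reachable_of_mem_supp hu hw).some.exists_boundary_dart {y | G.Adj u y ∨ G.Adj v y}
      (Or.inr huv.symm) (by simp [huw, hvw])
  simp only [Set.mem_ofPred_eq, not_or] at hx hw'
  obtain ⟨hux, hvx⟩ := hG.adj_and_adj_of_adj_outside huv hx hxw' hw'.1 hw'.2
  have hle := hmax (u, x) (mem_filter.2 ⟨mem_univ _, hux, hu⟩)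
  exact (card_lt_card (hG.neighborFinset_union_ssubset huv hvx hxw' hw'.1 hw'.2)).not_ge hle

end IsP4Free

lemma exists_notMem_supp_of_not_connected (h : ¬ G.Connected) (c : G.ConnectedComponent) :
    ∃ z, z ∉ c.supp := by
  obtain ⟨a, ha⟩ := c.nonempty_supp
  by_contra! hall
  exact h ((connected_iff_exists_forall_reachable G).2
    ⟨a, fun w => c.reachable_of_mem_supp ha (hall w)⟩)

lemma exists_adj_of_nontrivial_supp {c : G.ConnectedComponent} (hc : c.supp.Nontrivial) :
    ∃ a b, G.Adj a b ∧ a ∈ c.supp := by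
  obtain ⟨a, ha, a', ha', hne⟩ := hc
  obtain ⟨b, hab⟩ :=
    (mem_support G).1 (mem_support_of_reachable hne (c.reachable_of_mem_supp ha ha'))
  exact ⟨a, b, hab, ha⟩

variable [Fintype V] [DecidableRel G.Adj]

lemma card_supp_add_degree_lt {c : G.ConnectedComponent} {z : V} (hz : z ∉ c.supp) :
    Nat.card c.supp + G.degree z < Fintype.card V := by
  have hdisj : Disjoint c.supp.toFinset (G.neighborFinset z) := by
    refine Finset.disjoint_left.2 fun y hy hzy => hz ?_
    rw [Set.mem_toFinset] at hy
    rw [mem_neighborFinset] at hzy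
    exact c.mem_supp_of_adj_mem_supp hy hzy.symm
  have hz' : z ∉ c.supp.toFinset ∪ G.neighborFinset z := by simp [hz]
  rw [Nat.card_eq_card_toFinset, ← card_neighborFinset_eq_degree, ← card_union_of_disjoint hdisj,
    ← card_univ]
  exact card_lt_card (ssubset_univ_iff.2 fun h => hz' (h ▸ mem_univ z))

lemma card_supp_le_degree_add_degree {c : G.ConnectedComponent} {u v : V}
    (h : ∀ w ∈ c.supp, G.Adj u w ∨ G.Adj v w) :
    Nat.card c.supp ≤ G.degree u + G.degree v := by
  rw [Nat.card_eq_card_toFinset, ← card_neighborFinset_eq_degree, ← card_neighborFinset_eq_degree]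
  refine (card_le_card fun w hw => ?_).trans (card_union_le _ _)
  simpa using h w (Set.mem_toFinset.1 hw)

end SimpleGraph

open SimpleGraph in
theorem statement11_general (n : ℕ) (G : SimpleGraph (Fin n))
    (hP4 : ¬ ∃ a b c d : Fin n, a ≠ b ∧ a ≠ c ∧ a ≠ d ∧ b ≠ c ∧ b ≠ d ∧ c ≠ d ∧
      G.Adj a b ∧ G.Adj b c ∧ G.Adj c d ∧ ¬ G.Adj a c ∧ ¬ G.Adj b d ∧ ¬ G.Adj a d)
    (d ε : ℝ) (hε : 0 ≤ ε)
    (hdeg : ∀ v : Fin n, |(G.degree v : ℝ) / n - d| ≤ ε)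
    (hdisc : ¬ G.Connected) :
    ∀ c : G.ConnectedComponent, (Nat.card c.supp : ℝ) ≤ n * (2/3 + 4/3 * ε) := by
  intro c
  obtain ⟨z, hz⟩ := exists_notMem_supp_of_not_connected hdisc c
  have hout : Nat.card c.supp + G.degree z < n := by
    simpa using card_supp_add_degree_lt hz
  have hn : (0 : ℝ) < n := Nat.cast_pos.2 z.pos
  have hdeg_bounds (v : Fin n) : (d - ε) * n ≤ G.degree v ∧ (G.degree v : ℝ) ≤ (d + ε) * n := by
    obtain ⟨hlo, hhi⟩ := abs_le.1 (hdeg v)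
    exact ⟨(le_div_iff₀ hn).1 (by linarith), (div_le_iff₀ hn).1 (by linarith)⟩
  rcases c.supp.subsingleton_or_nontrivial with hc | hc
  · have : Nat.card c.supp ≤ 1 := Finite.card_le_one_iff_subsingleton.2 hc.coe_sort
    have : (3 * Nat.card c.supp : ℝ) ≤ 2 * n := by exact_mod_cast (by omega : _ ≤ 2 * n)
    linarith [mul_nonneg hn.le hε]
  · obtain ⟨a, b, hab, ha⟩ := exists_adj_of_nontrivial_supp hc
    obtain ⟨u, v, -, hcover⟩ := (isP4Free_of_not_exists hP4).exists_adj_forall_mem_supp hab ha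
    have hcov : (Nat.card c.supp : ℝ) ≤ G.degree u + G.degree v := by
      exact_mod_cast card_supp_le_degree_add_degree hcover
    have hout' : (Nat.card c.supp : ℝ) + G.degree z ≤ n := by exact_mod_cast hout.le
    linarith [(hdeg_bounds u).2, (hdeg_bounds v).2, (hdeg_bounds z).1]

/-- if `G` is a disconnected cograph (no induced path on four vertices)
on `n` vertices in which every degree satisfies `|deg(v)/n − d| ≤ ε`, then every
connected component of `G` has at most `n(2/3 + (4/3)ε)` vertices. -/
theorem statement11 (n : ℕ) (G : SimpleGraph (Fin n))
    (hP4 : ¬ ∃ a b c d : Fin n, a ≠ b ∧ a ≠ c ∧ a ≠ d ∧ b ≠ c ∧ b ≠ d ∧ c ≠ d ∧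
      G.Adj a b ∧ G.Adj b c ∧ G.Adj c d ∧ ¬ G.Adj a c ∧ ¬ G.Adj b d ∧ ¬ G.Adj a d)
    (d ε : ℝ) (hd : d ∈ Set.Icc (0 : ℝ) 1) (hε : 0 ≤ ε)
    (hdeg : ∀ v : Fin n, |(G.degree v : ℝ) / n - d| ≤ ε)
    (hdisc : ¬ G.Connected) :
    ∀ c : G.ConnectedComponent, (Nat.card c.supp : ℝ) ≤ n * (2/3 + 4/3 * ε) :=
  statement11_general n G hP4 d ε hε hdeg hdisc
end
end

section
/- Let T be a locally finite rooted tree (every vertex has finitely many children) in which every vertex other than the root either is a leaf or has at least two children. Then there exists exactly one pair of functions f, c : V(T) → [0,∞) satisfying: f(r) = 1 for the root r; f(u) = Σ_{v child of u} f(v) for every non-leaf vertex u; c(u) + c(v) = f(v) whenever v is a child of u; and c(u) = 0 for every leaf u. (Such pairs (f,c) encode exactly the regular complement-reducible graphons on the path space of T, so this expresses that every locally finite rooted tree carries a unique regular CR-graphon.) -/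
open MeasureTheory
open scoped Classical

noncomputable section

/-- In a rooted tree `(T, r)`, `v` is a child of `u` if they are adjacent and `v` is
one step farther from the root. -/
def childRel {V : Type} (T : SimpleGraph V) (r : V) (u v : V) : Prop :=
  T.Adj u v ∧ T.dist r v = T.dist r u + 1

/-!
Write `x(v) = c(v) / f(v)`. Along an edge `u → v` the equation `c(u) + c(v) = f(v)` reads
`f(v) (1 - x(v)) = x(u) f(u)`, and then `f(u) = ∑ f(v)` over the children becomes
`x(u) = (∑_{v child of u} (1 - x(v))⁻¹)⁻¹`, with `x = 0` at leaves. Conversely a solution `x`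
determines `f` from the root downwards and `c = x f`. So it suffices to show that this equation
has exactly one solution. Branching forces `x ≤ 1/2` below the root, every child then contributes
a term in `[1, 2]`, and on such functions the map is a `2/3`-contraction for the sup distance
over the children. This gives uniqueness, and also existence, since the map is antitone and
Knaster–Tarski yields a `2`-cycle that the contraction collapses to a fixed point.
-/

open Finset Function

section RatioMap

variable {V : Type*}

/-- `x v` stands for `c(v) / f(v)`. At a leaf the empty sum gives `0⁻¹ = 0`, which is the
condition `c = 0`. -/
def ratioMap (ch : V → Finset V) (x : V → ℝ) (v : V) : ℝ :=
  (∑ w ∈ ch v, (1 - x w)⁻¹)⁻¹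

def HalfBounded (ch : V → Finset V) (x : V → ℝ) : Prop :=
  ∀ u, ∀ w ∈ ch u, x w ∈ Set.Icc (0 : ℝ) 2⁻¹

variable {ch : V → Finset V} {x y p q : V → ℝ} {u v : V}

lemma HalfBounded.lt_one (hx : HalfBounded ch x) (hv : v ∈ ch u) : x v < 1 :=
  (hx u v hv).2.trans_lt (by norm_num)

lemma two_le_card_of_ne_one {s : Finset V} (hs : s.Nonempty) (h : #s ≠ 1) : 2 ≤ #s := by
  have := hs.card_pos
  omega

lemma ratioMap_congr (h : ∀ w ∈ ch v, x w = y w) : ratioMap ch x v = ratioMap ch y v := by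
  rw [ratioMap, ratioMap, sum_congr rfl fun w hw => by rw [h w hw]]

lemma ratioMap_of_eq_empty (hv : ch v = ∅) : ratioMap ch x v = 0 := by
  simp [ratioMap, hv]

lemma ratioMap_nonneg (hx : ∀ w ∈ ch v, x w ≤ 1) : 0 ≤ ratioMap ch x v :=
  inv_nonneg.2 <| sum_nonneg fun w hw => inv_nonneg.2 <| sub_nonneg.2 (hx w hw)

lemma one_le_inv_one_sub {t : ℝ} (ht : t ∈ Set.Icc (0 : ℝ) 2⁻¹) : 1 ≤ (1 - t)⁻¹ :=
  (one_le_inv₀ (by linarith [ht.2])).2 (by linarith [ht.1])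

lemma inv_one_sub_le_two {t : ℝ} (ht : t ∈ Set.Icc (0 : ℝ) 2⁻¹) : (1 - t)⁻¹ ≤ 2 := by
  rw [inv_le_comm₀ (by linarith [ht.2]) two_pos]
  linarith [ht.2]

lemma card_le_sum_inv_one_sub {s : Finset V} (hx : ∀ w ∈ s, x w ∈ Set.Icc (0 : ℝ) 2⁻¹) :
    (#s : ℝ) ≤ ∑ w ∈ s, (1 - x w)⁻¹ := by
  simpa using card_nsmul_le_sum s _ 1 fun w hw => one_le_inv_one_sub (hx w hw)

lemma ratioMap_mem_Icc (hv : #(ch v) ≠ 1) (hx : ∀ w ∈ ch v, x w ∈ Set.Icc (0 : ℝ) 2⁻¹) :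
    ratioMap ch x v ∈ Set.Icc (0 : ℝ) 2⁻¹ := by
  refine ⟨ratioMap_nonneg fun w hw => (hx w hw).2.trans (by norm_num), ?_⟩
  rcases (ch v).eq_empty_or_nonempty with hemp | hne
  · rw [ratioMap_of_eq_empty hemp]; norm_num
  · have h2 : (2 : ℝ) ≤ #(ch v) := by exact_mod_cast two_le_card_of_ne_one hne hv
    exact inv_anti₀ two_pos (h2.trans (card_le_sum_inv_one_sub hx))

lemma ratioMap_anti (hxy : ∀ w ∈ ch v, x w ≤ y w) (hy : ∀ w ∈ ch v, y w < 1) :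
    ratioMap ch y v ≤ ratioMap ch x v := by
  rcases (ch v).eq_empty_or_nonempty with hemp | hne
  · simp [ratioMap_of_eq_empty hemp]
  · refine inv_anti₀ (sum_pos (fun w hw => ?_) hne) (sum_le_sum fun w hw => ?_)
    · exact inv_pos.2 (by linarith [hxy w hw, hy w hw])
    · exact inv_anti₀ (sub_pos.2 (hy w hw)) (by linarith [hxy w hw])

lemma le_two_thirds_mul_sum {s : Finset V} (hs : 2 ≤ #s) {P : V → ℝ}
    (hP : ∀ w ∈ s, P w ∈ Set.Icc (1 : ℝ) 2) {w : V} (hw : w ∈ s) :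
    P w ≤ 2 / 3 * ∑ u ∈ s, P u := by
  have hrest : (1 : ℝ) ≤ ∑ u ∈ s.erase w, P u := by
    have hcard : (1 : ℝ) ≤ #(s.erase w) := by
      rw [card_erase_of_mem hw]; exact_mod_cast (by omega : 1 ≤ #s - 1)
    refine hcard.trans ?_
    simpa using card_nsmul_le_sum (s.erase w) P 1 fun u hu => (hP u (mem_of_mem_erase hu)).1
  rw [← add_sum_erase s P hw]
  linarith [(hP w hw).2]

lemma abs_ratioMap_sub_le {δ : ℝ} (hv : 2 ≤ #(ch v))
    (hp : ∀ w ∈ ch v, p w ∈ Set.Icc (0 : ℝ) 2⁻¹) (hq : ∀ w ∈ ch v, q w ∈ Set.Icc (0 : ℝ) 2⁻¹)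
    (hpq : ∀ w ∈ ch v, |p w - q w| ≤ δ) :
    |ratioMap ch p v - ratioMap ch q v| ≤ 2 / 3 * δ := by
  set P : V → ℝ := fun w => (1 - p w)⁻¹
  set Q : V → ℝ := fun w => (1 - q w)⁻¹
  have hPb : ∀ w ∈ ch v, P w ∈ Set.Icc (1 : ℝ) 2 :=
    fun w hw => ⟨one_le_inv_one_sub (hp w hw), inv_one_sub_le_two (hp w hw)⟩
  have hQ0 : ∀ w ∈ ch v, 0 ≤ Q w := fun w hw => zero_le_one.trans (one_le_inv_one_sub (hq w hw))
  have h2 : (2 : ℝ) ≤ #(ch v) := by exact_mod_cast hv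
  have hSP : 0 < ∑ w ∈ ch v, P w := by linarith [card_le_sum_inv_one_sub hp]
  have hSQ : 0 < ∑ w ∈ ch v, Q w := by linarith [card_le_sum_inv_one_sub hq]
  obtain ⟨w₀, hw₀⟩ := card_pos.1 (by omega : 0 < #(ch v))
  have hδ : 0 ≤ δ := (abs_nonneg _).trans (hpq w₀ hw₀)
  have hQP : ∀ w ∈ ch v, |Q w - P w| ≤ δ * (2 / 3 * (∑ u ∈ ch v, P u) * Q w) := by
    intro w hw
    have hp1 : 1 - p w ≠ 0 := by linarith [(hp w hw).2]
    have hq1 : 1 - q w ≠ 0 := by linarith [(hq w hw).2]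
    have hdiff : Q w - P w = (q w - p w) * (P w * Q w) := by
      simp only [P, Q]; field_simp; ring
    have hPQ : 0 ≤ P w * Q w := mul_nonneg (by linarith [(hPb w hw).1]) (hQ0 w hw)
    rw [hdiff, abs_mul, abs_sub_comm, abs_of_nonneg hPQ]
    calc |p w - q w| * (P w * Q w) ≤ δ * (P w * Q w) := by
          gcongr; exact hpq w hw
      _ ≤ δ * (2 / 3 * (∑ u ∈ ch v, P u) * Q w) := by
          gcongr; · exact hQ0 w hw
          exact le_two_thirds_mul_sum hv hPb hw
  calc |ratioMap ch p v - ratioMap ch q v|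
      = |∑ w ∈ ch v, (Q w - P w)| / ((∑ w ∈ ch v, P w) * ∑ w ∈ ch v, Q w) := by
        rw [ratioMap, ratioMap, inv_sub_inv hSP.ne' hSQ.ne', abs_div, sum_sub_distrib,
          abs_of_pos (mul_pos hSP hSQ)]
    _ ≤ (∑ w ∈ ch v, δ * (2 / 3 * (∑ u ∈ ch v, P u) * Q w)) /
          ((∑ w ∈ ch v, P w) * ∑ w ∈ ch v, Q w) := by
        gcongr
        exact (abs_sum_le_sum_abs _ _).trans (sum_le_sum hQP)
    _ = 2 / 3 * δ := by
        rw [← mul_sum, ← mul_sum]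
        field_simp

lemma nonpos_of_le_two_thirds_mul {D : V → ℝ} (hD : ∀ u, ∀ w ∈ ch u, D w ≤ 1)
    (hstep : ∀ u, ∀ v ∈ ch u, ∀ δ, 0 ≤ δ → (∀ w ∈ ch v, D w ≤ δ) → D v ≤ 2 / 3 * δ) :
    ∀ u, ∀ v ∈ ch u, D v ≤ 0 := by
  have hpow : ∀ n : ℕ, ∀ u, ∀ v ∈ ch u, D v ≤ (2 / 3 : ℝ) ^ n := by
    intro n
    induction n with
    | zero => simpa using hD
    | succ n ih =>
      intro u v hv
      rw [pow_succ']
      exact hstep u v hv _ (by positivity) fun w hw => ih v w hw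
  intro u v hv
  exact ge_of_tendsto' (tendsto_pow_atTop_nhds_zero_of_lt_one (by norm_num) (by norm_num))
    fun n => hpow n u v hv

/-- Covers both a pair of fixed points (`p = x`, `q = y`) and a `2`-cycle (`p = y`, `q = x`). -/
lemma eq_of_eq_ratioMap (hb : ∀ u, ∀ w ∈ ch u, #(ch w) ≠ 1)
    (hp : HalfBounded ch p) (hq : HalfBounded ch q)
    (hx : ∀ u, ∀ w ∈ ch u, x w = ratioMap ch p w) (hy : ∀ u, ∀ w ∈ ch u, y w = ratioMap ch q w)
    (hpq : ∀ u, ∀ w ∈ ch u, |p w - q w| = |x w - y w|) :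
    ∀ u, ∀ w ∈ ch u, x w = y w := by
  have hxy := nonpos_of_le_two_thirds_mul (ch := ch) (D := fun w => |x w - y w|) ?_ ?_
  · exact fun u w hw => sub_eq_zero.1 (abs_nonpos_iff.1 (hxy u w hw))
  · intro u w hw
    have hxw := hx u w hw ▸ ratioMap_mem_Icc (hb u w hw) (hp w)
    have hyw := hy u w hw ▸ ratioMap_mem_Icc (hb u w hw) (hq w)
    exact abs_le.2 ⟨by linarith [hxw.1, hyw.2], by linarith [hxw.2, hyw.1]⟩
  · intro u v hv δ hδ hD
    rw [hx u v hv, hy u v hv]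
    rcases (ch v).eq_empty_or_nonempty with hemp | hne
    · simp [ratioMap_of_eq_empty hemp, hδ]
    · exact abs_ratioMap_sub_le (two_le_card_of_ne_one hne (hb u v hv)) (hp v) (hq v)
        fun w hw => (hpq v w hw).le.trans (hD w hw)

lemma HalfBounded.eq_of_isFixedPt (hb : ∀ u, ∀ w ∈ ch u, #(ch w) ≠ 1)
    (hx : HalfBounded ch x) (hy : HalfBounded ch y)
    (hxf : IsFixedPt (ratioMap ch) x) (hyf : IsFixedPt (ratioMap ch) y) : x = y := by
  have hchildren := eq_of_eq_ratioMap hb hx hy (fun _ w _ => (congrFun hxf w).symm)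
    (fun _ w _ => (congrFun hyf w).symm) fun _ _ _ => rfl
  funext v
  calc x v = ratioMap ch x v := (congrFun hxf v).symm
    _ = ratioMap ch y v := ratioMap_congr fun w hw => hchildren v w hw
    _ = y v := congrFun hyf v

lemma exists_halfBounded_isFixedPt (hb : ∀ u, ∀ w ∈ ch u, #(ch w) ≠ 1) :
    ∃ x, HalfBounded ch x ∧ IsFixedPt (ratioMap ch) x := by
  have : Fact ((0 : V → ℝ) ≤ fun _ => 2⁻¹) := ⟨fun _ => by norm_num⟩
  let L := Set.Icc (0 : V → ℝ) fun _ => 2⁻¹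
  have hL : ∀ z : L, ∀ w, z.1 w ∈ Set.Icc (0 : ℝ) 2⁻¹ := fun z w => ⟨z.2.1 w, z.2.2 w⟩
  -- clamping keeps `Ψ` inside `L`; on children it is inactive by `ratioMap_mem_Icc`
  let Ψ : L → L := fun z =>
    ⟨fun v => min (ratioMap ch z v) 2⁻¹,
      fun v => le_min (ratioMap_nonneg fun w _ => (hL z w).2.trans (by norm_num)) (by norm_num),
      fun v => min_le_right _ _⟩
  have hΨ : Antitone Ψ := fun z z' hzz' v => min_le_min_right _ <|
    ratioMap_anti (fun w _ => hzz' w) fun w _ => (hL z' w).2.trans_lt (by norm_num)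
  have hΨ_child : ∀ z : L, ∀ u, ∀ w ∈ ch u, (Ψ z).1 w = ratioMap ch z w :=
    fun z u w hw => min_eq_left (ratioMap_mem_Icc (hb u w hw) fun w' _ => hL z w').2
  let Ψ₂ : L →o L := ⟨Ψ ∘ Ψ, hΨ.comp hΨ⟩
  set a := Ψ₂.lfp
  have ha : Ψ (Ψ a) = a := Ψ₂.map_lfp
  have hab := eq_of_eq_ratioMap hb (p := (Ψ a).1) (q := a.1) (x := a.1) (y := (Ψ a).1)
    (fun u w _ => hL _ w) (fun u w _ => hL _ w)
    (fun u w hw => by rw [← hΨ_child _ u w hw, ha]) (hΨ_child a)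
    fun _ _ _ => abs_sub_comm _ _
  refine ⟨ratioMap ch a, fun u w hw => ratioMap_mem_Icc (hb u w hw) fun w' _ => hL a w', ?_⟩
  funext v
  refine ratioMap_congr fun w hw => ?_
  rw [← hΨ_child a v w hw, hab v w hw]

end RatioMap

section RootedTree

variable {V : Type} {T : SimpleGraph V} {r u v : V}

lemma childRel.ne_root (h : childRel T r u v) : v ≠ r := by
  rintro rfl
  simpa using h.2

lemma exists_childRel_of_ne_root (hconn : T.Connected) (hv : v ≠ r) : ∃ u, childRel T r u v := by
  obtain ⟨p, hp⟩ := hconn.exists_walk_length_eq_dist v r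
  cases p with
  | nil => exact absurd rfl hv
  | cons hadj q =>
    rename_i u
    refine ⟨u, hadj.symm, ?_⟩
    have hu : T.dist r u ≤ q.length := SimpleGraph.dist_comm (G := T) ▸ SimpleGraph.dist_le q
    have hv : T.dist r v = q.length + 1 := by
      rw [SimpleGraph.dist_comm, ← hp, SimpleGraph.Walk.length_cons]
    have := hadj.symm.diff_dist_adj (u := r)
    omega

lemma childRel.unique_left (hconn : T.Connected) (hacyc : T.IsAcyclic) {u' : V}
    (h : childRel T r u v) (h' : childRel T r u' v) : u = u' := by
  have hpath : ∀ {u}, childRel T r u v →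
      ∃ p : T.Walk r v, p.IsPath ∧ p.penultimate = u := by
    intro u h
    obtain ⟨p, hp⟩ := hconn.exists_walk_length_eq_dist r u
    refine ⟨p.concat h.1, (p.concat h.1).isPath_of_length_eq_dist ?_, p.penultimate_concat h.1⟩
    rw [SimpleGraph.Walk.length_concat, hp, h.2]
  obtain ⟨p, hp, rfl⟩ := hpath h
  obtain ⟨p', hp', rfl⟩ := hpath h'
  rw [Subtype.mk.inj ((hacyc.subsingleton_path r v).elim ⟨p, hp⟩ ⟨p', hp'⟩)]

theorem childRel_induction (hconn : T.Connected) {P : V → Prop} (root : P r)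
    (step : ∀ u v, childRel T r u v → P u → P v) (v : V) : P v := by
  induction hd : T.dist r v generalizing v with
  | zero => rwa [← (hconn.dist_eq_zero_iff.1 hd)]
  | succ n ih =>
    have hv : v ≠ r := by rintro rfl; simp at hd
    obtain ⟨u, hu⟩ := exists_childRel_of_ne_root hconn hv
    exact step u v hu (ih u (by have := hu.2; omega))

noncomputable def treeParent (T : SimpleGraph V) (r v : V) : V :=
  if h : ∃ u, childRel T r u v then h.choose else v

lemma treeParent_eq (hconn : T.Connected) (hacyc : T.IsAcyclic) (h : childRel T r u v) :
    treeParent T r v = u := by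
  have hex : ∃ u, childRel T r u v := ⟨u, h⟩
  rw [treeParent, dif_pos hex]
  exact hex.choose_spec.unique_left hconn hacyc h

noncomputable def parentRec {α : Type*} (par : V → V) (a : α) (φ : V → V → α → α) :
    ℕ → V → α
  | 0, _ => a
  | n + 1, v => φ (par v) v (parentRec par a φ n (par v))

theorem existsUnique_childRel_rec (hconn : T.Connected) (hacyc : T.IsAcyclic) {α : Type*}
    (a : α) (φ : V → V → α → α) :
    ∃! f : V → α, f r = a ∧ ∀ u v, childRel T r u v → f v = φ u v (f u) := by
  set f := fun v => parentRec (treeParent T r) a φ (T.dist r v) v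
  have hf : ∀ u v, childRel T r u v → f v = φ u v (f u) := by
    intro u v h
    simp only [f, h.2, parentRec, treeParent_eq hconn hacyc h]
  refine ⟨f, ⟨by simp [f, parentRec], hf⟩, fun g ⟨hg0, hg⟩ => ?_⟩
  refine funext (childRel_induction (r := r) hconn (P := fun v => g v = f v) ?_ fun u v h hu => ?_)
  · simp [f, parentRec, hg0]
  · rw [hg u v h, hf u v h, hu]

end RootedTree

section CRPair

variable {V : Type} {T : SimpleGraph V} {r : V} {ch : V → Finset V} {x f F C : V → ℝ}

def IsCRPair (ch : V → Finset V) (r : V) (f c : V → ℝ) : Prop :=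
  (∀ v, 0 ≤ f v) ∧ (∀ v, 0 ≤ c v) ∧ f r = 1 ∧
    (∀ u, (ch u).Nonempty → f u = ∑ v ∈ ch u, f v) ∧
    (∀ u v, v ∈ ch u → c u + c v = f v) ∧ (∀ u, ch u = ∅ → c u = 0)

lemma mul_add_mul_eq_iff_eq_div {x₁ x₂ f₁ f₂ : ℝ} (hx₂ : x₂ ≠ 1) :
    x₁ * f₁ + x₂ * f₂ = f₂ ↔ f₂ = f₁ * x₁ / (1 - x₂) := by
  rw [eq_div_iff (sub_ne_zero.2 hx₂.symm)]
  constructor <;> intro h <;> linear_combination -h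

lemma isCRPair_of_isFixedPt (hconn : T.Connected) (hch : ∀ u v, v ∈ ch u ↔ childRel T r u v)
    (hx : HalfBounded ch x) (hfix : IsFixedPt (ratioMap ch) x)
    (hf0 : f r = 1) (hf : ∀ u v, childRel T r u v → f v = f u * x u / (1 - x v)) :
    IsCRPair ch r f (x * f) := by
  have hx0 : ∀ v, 0 ≤ x v := fun v =>
    congrFun hfix v ▸ ratioMap_nonneg fun w hw => (hx v w hw).2.trans (by norm_num)
  have hx1 : ∀ u, ∀ v ∈ ch u, 0 < 1 - x v := fun u v hv => sub_pos.2 (hx.lt_one hv)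
  have hf_nonneg : ∀ v, 0 ≤ f v := childRel_induction hconn (by rw [hf0]; exact zero_le_one)
    fun u v h hu => by
      rw [hf u v h]
      have := hx1 u v ((hch u v).2 h)
      have := hx0 u
      positivity
  refine ⟨hf_nonneg, fun v => mul_nonneg (hx0 v) (hf_nonneg v), hf0, fun u hu => ?_,
    fun u v hv => ?_, fun u hu => ?_⟩
  · have hS : ∑ v ∈ ch u, (1 - x v)⁻¹ ≠ 0 :=
      (sum_pos (fun v hv => inv_pos.2 (hx1 u v hv)) hu).ne'
    calc f u = f u * (x u * ∑ v ∈ ch u, (1 - x v)⁻¹) := by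
          rw [← congrFun hfix u, ratioMap, inv_mul_cancel₀ hS, mul_one]
      _ = ∑ v ∈ ch u, f v := by
          rw [mul_sum, mul_sum]
          refine sum_congr rfl fun v hv => ?_
          rw [hf u v ((hch u v).1 hv)]
          ring
  · exact (mul_add_mul_eq_iff_eq_div (hx.lt_one hv).ne).2 (hf u v ((hch u v).1 hv))
  · simp [← congrFun hfix u, ratioMap_of_eq_empty hu]

lemma IsCRPair.card_mul_le (h : IsCRPair ch r F C) (v : V) : #(ch v) * C v ≤ F v := by
  obtain ⟨hF0, hC0, -, hsum, hadd, -⟩ := h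
  rcases (ch v).eq_empty_or_nonempty with hemp | hne
  · simpa [hemp] using hF0 v
  · calc (#(ch v) : ℝ) * C v = ∑ w ∈ ch v, C v := by rw [sum_const, nsmul_eq_mul]
      _ ≤ ∑ w ∈ ch v, F w := sum_le_sum fun w hw => by linarith [hadd v w hw, hC0 w]
      _ = F v := (hsum v hne).symm

/-- If `c(u) = 0` then every child `w` has `c(w) = f(w)`, which the branching condition forces
to vanish; so `f(u) = 0`, and positivity propagates down from the root. -/
lemma IsCRPair.fst_pos (hconn : T.Connected) (hch : ∀ u v, v ∈ ch u ↔ childRel T r u v)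
    (hb : ∀ u, ∀ w ∈ ch u, #(ch w) ≠ 1) (h : IsCRPair ch r F C) (v : V) : 0 < F v := by
  have hcard_mul := h.card_mul_le
  obtain ⟨hF0, hC0, hFr, hsum, hadd, hleaf⟩ := h
  refine childRel_induction (P := fun v => 0 < F v) hconn (by rw [hFr]; exact one_pos)
    (fun u v huv hu => ?_) v
  have hv := (hch u v).2 huv
  by_contra! hFv
  have hCu : C u = 0 := by linarith [hadd u v hv, hC0 u, hC0 v]
  have hzero : ∀ w ∈ ch u, F w = 0 := by
    intro w hw
    have hCw : C w = F w := by linarith [hadd u w hw]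
    rcases (ch w).eq_empty_or_nonempty with hemp | hne
    · rw [← hCw, hleaf w hemp]
    · have hcard : (2 : ℝ) ≤ #(ch w) := by
        exact_mod_cast two_le_card_of_ne_one hne (hb u w hw)
      nlinarith [hcard_mul w, hF0 w]
  linarith [hsum u ⟨v, hv⟩, sum_eq_zero hzero]

lemma IsCRPair.halfBounded (hb : ∀ u, ∀ w ∈ ch u, #(ch w) ≠ 1) (h : IsCRPair ch r F C) :
    HalfBounded ch (C / F) := by
  have hcard_mul := h.card_mul_le
  obtain ⟨hF0, hC0, -, -, -, hleaf⟩ := h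
  intro u w hw
  refine ⟨div_nonneg (hC0 w) (hF0 w), ?_⟩
  rcases (ch w).eq_empty_or_nonempty with hemp | hne
  · simp [hleaf w hemp]
  · have hcard : (2 : ℝ) ≤ #(ch w) := by
      exact_mod_cast two_le_card_of_ne_one hne (hb u w hw)
    refine div_le_of_le_mul₀ (hF0 w) (by norm_num) ?_
    nlinarith [hcard_mul w, hC0 w]

lemma IsCRPair.isFixedPt (h : IsCRPair ch r F C) (hF : ∀ v, 0 < F v) :
    IsFixedPt (ratioMap ch) (C / F) := by
  obtain ⟨-, -, -, hsum, hadd, hleaf⟩ := h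
  funext v
  rcases (ch v).eq_empty_or_nonempty with hemp | hne
  · simp [ratioMap_of_eq_empty hemp, hleaf v hemp]
  · have hterm : ∀ w ∈ ch v, (1 - (C / F) w)⁻¹ = F w / C v := by
      intro w hw
      have hFw := (hF w).ne'
      rw [Pi.div_apply, show 1 - C w / F w = C v / F w by field_simp; linarith [hadd v w hw],
        inv_div]
    rw [ratioMap, sum_congr rfl hterm, ← sum_div, ← hsum v hne, inv_div, Pi.div_apply]

end CRPair

/-- let `T` be a locally finite rooted tree in which every vertex other
than the root is either a leaf or has at least two children.  Then there is exactly one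
pair of nonnegative functions `(f, c)` on `V(T)` with `f(r) = 1`,
`f(u) = Σ_{v child of u} f(v)` for every non-leaf `u`, `c(u) + c(v) = f(v)` whenever
`v` is a child of `u`, and `c(u) = 0` for every leaf `u`.  (Such pairs encode exactly
the regular complement-reducible graphons on the path space of `T`.) -/
theorem statement12 (V : Type) (T : SimpleGraph V) (r : V)
    (hconn : T.Connected) (hacyc : T.IsAcyclic)
    (hlf : ∀ u : V, {v | childRel T r u v}.Finite)
    (hbranch : ∀ v : V, v ≠ r →
      {w | childRel T r v w} = ∅ ∨ 2 ≤ {w | childRel T r v w}.ncard) :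
    ∃! fc : (V → ℝ) × (V → ℝ),
      (∀ v, 0 ≤ fc.1 v) ∧ (∀ v, 0 ≤ fc.2 v) ∧
      fc.1 r = 1 ∧
      (∀ u, {v | childRel T r u v}.Nonempty →
        fc.1 u = ∑ᶠ v ∈ {v | childRel T r u v}, fc.1 v) ∧
      (∀ u v, childRel T r u v → fc.2 u + fc.2 v = fc.1 v) ∧
      (∀ u, {v | childRel T r u v} = ∅ → fc.2 u = 0) := by
  obtain ⟨ch, hch⟩ : ∃ ch : V → Finset V, ∀ u v, v ∈ ch u ↔ childRel T r u v :=
    ⟨fun u => (hlf u).toFinset, fun u _ => (hlf u).mem_toFinset⟩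
  have hset : ∀ u, {v | childRel T r u v} = ↑(ch u) := fun u => by ext; simp [hch]
  have hb : ∀ u, ∀ w ∈ ch u, #(ch w) ≠ 1 := fun u w hw => by
    have := hbranch w ((hch u w).1 hw).ne_root
    rw [hset, Finset.coe_eq_empty, Set.ncard_coe_finset] at this
    rcases this with h | h
    · simp [h]
    · omega
  simp only [hset, Finset.coe_nonempty, Finset.coe_eq_empty, finsum_mem_coe_finset]
  simp only [← hch]
  change ∃! fc : (V → ℝ) × (V → ℝ), IsCRPair ch r fc.1 fc.2
  obtain ⟨x, hx, hfix⟩ := exists_halfBounded_isFixedPt hb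
  obtain ⟨f, ⟨hf0, hf⟩, hf_unique⟩ :=
    existsUnique_childRel_rec hconn hacyc (1 : ℝ) fun u v t => t * x u / (1 - x v)
  refine ⟨(f, x * f), isCRPair_of_isFixedPt hconn hch hx hfix hf0 hf, ?_⟩
  rintro ⟨F, C⟩ (hFC : IsCRPair ch r F C)
  have hF := hFC.fst_pos hconn hch hb
  have hξ : C / F = x := (hFC.halfBounded hb).eq_of_isFixedPt hb hx (hFC.isFixedPt hF) hfix
  have hC : C = x * F := by
    rw [← hξ]; funext v; simp [div_mul_cancel₀ _ (hF v).ne']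
  obtain ⟨-, -, hF1, -, hadd, -⟩ := hFC
  have hFf : F = f := hf_unique F ⟨hF1, fun u v h =>
    (mul_add_mul_eq_iff_eq_div (hx.lt_one ((hch u v).2 h)).ne).1
      (by simpa [hC] using hadd u v ((hch u v).2 h))⟩
  rw [hC, hFf]
end
end

section
/- Let W ∈ 𝒲₀ be a stepfunction which is d-regular and satisfies ∫_{[0,1]⁴} W(x₁,x₂)W(x₂,x₃)W(x₃,x₄)(1 − W(x₁,x₃))(1 − W(x₂,x₄))(1 − W(x₁,x₄)) dx₁dx₂dx₃dx₄ = 0 (i.e. the density of induced paths on four vertices in W is zero, so W is a complement reducible graphon). Then d is a rational number. -/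
open MeasureTheory
open scoped Classical

noncomputable section

/-- `W ∈ 𝒲` is a stepfunction: there is a finite measurable partition of `[0,1]`
such that `W` is a.e. constant on each product of classes. -/
def IsStepfunction (W : ℝ → ℝ → ℝ) : Prop :=
  ∃ (n : ℕ) (S : Fin n → Set ℝ),
    (∀ i, MeasurableSet (S i)) ∧
    (Pairwise fun i j => Disjoint (S i) (S j)) ∧
    (⋃ i, S i) = I01 ∧
    ∀ i j, ∃ c : ℝ, ∀ᵐ q : ℝ × ℝ ∂(volume.restrict ((S i) ×ˢ (S j))), W q.1 q.2 = c

/-!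
A stepfunction graphon is described by the measures `μ i` of its classes and its values `K i j`
on products of classes. Regularity says `∑ j, K i j * μ j = d` for every class `i` of positive
measure, and a vanishing induced-`P₄` density forces `K` to be `0`/`1`-valued on these classes,
with the graph `{K i j = 1}` free of induced `P₄`, i.e. a cograph. By Seinsche's theorem a cograph
on at least two vertices is the disjoint union or the join of two smaller ones, and by induction
the degree of a regular weighted cograph is a rational multiple of its total weight: in a
disjoint union `d = p * m₁ = q * m₂` gives `d = (p⁻¹ + q⁻¹)⁻¹ * (m₁ + m₂)`, and complementing
turns a join into a disjoint union. The total weight of a graphon is `1`.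
-/

namespace SimpleGraph

variable {α : Type*} (G : SimpleGraph α)

def IsP4FreeOn (s : Finset α) : Prop :=
  ∀ a ∈ s, ∀ b ∈ s, ∀ c ∈ s, ∀ d ∈ s,
    G.Adj a b → G.Adj b c → G.Adj c d → G.Adj a c ∨ G.Adj b d ∨ G.Adj a d

structure IsSeparation (s t : Finset α) : Prop where
  subset : t ⊆ s
  nonempty : t.Nonempty
  sdiff_nonempty : (s \ t).Nonempty
  not_adj : ∀ a ∈ t, ∀ b ∈ s \ t, ¬G.Adj a b

def IsAdjMatrixWithLoopsOn (K : α → α → ℝ) (s : Finset α) : Prop :=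
  ∀ i ∈ s, ∀ j ∈ s, (K i j = 0 ∨ K i j = 1) ∧ (i ≠ j → (G.Adj i j ↔ K i j = 1))

variable {G} {s t : Finset α} {v : α} {K : α → α → ℝ} {μ : α → ℝ}

lemma IsP4FreeOn.mono {s' : Finset α} (h : G.IsP4FreeOn s) (hs : s' ⊆ s) : G.IsP4FreeOn s' :=
  fun a ha b hb c hc d hd => h a (hs ha) b (hs hb) c (hs hc) d (hs hd)

lemma IsP4FreeOn.compl (h : G.IsP4FreeOn s) : Gᶜ.IsP4FreeOn s := by
  intro a ha b hb c hc d hd hab hbc hcd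
  by_contra! hne
  simp only [compl_adj, not_and, not_not] at hab hbc hcd hne
  obtain ⟨hac, hbd, had⟩ := hne
  have hac' : G.Adj a c := hac fun h => by subst h; exact hcd.2 (had hcd.1)
  have had' : G.Adj a d := had fun h => by subst h; exact hcd.2 (hac hcd.1.symm).symm
  have hbd' : G.Adj b d := hbd fun h => by subst h; exact hab.2 (had hab.1)
  rcases h c hc a ha d hd b hb hac'.symm had' hbd'.symm with h | h | h
  · exact hcd.2 h
  · exact hab.2 h
  · exact hbc.2 h.symm

lemma IsSeparation.sdiff (h : G.IsSeparation s t) : G.IsSeparation s (s \ t) := by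
  obtain ⟨hts, ht, hst, hsep⟩ := h
  refine ⟨Finset.sdiff_subset, hst, by rwa [Finset.sdiff_sdiff_eq_self hts],
    fun a ha b hb hab => ?_⟩
  rw [Finset.sdiff_sdiff_eq_self hts] at hb
  exact hsep b hb a ha hab.symm

lemma IsSeparation.ssubset (h : G.IsSeparation s t) : t ⊂ s :=
  let ⟨x, hx⟩ := h.sdiff_nonempty
  (Finset.ssubset_iff_of_subset h.subset).2 ⟨x, Finset.mem_sdiff.1 hx⟩

lemma isSeparation_singleton {w : α} (hv : v ∈ s) (hw : w ∈ s) (hwv : w ≠ v)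
    (h : ∀ u ∈ s, ¬G.Adj v u) : G.IsSeparation s {v} :=
  ⟨by simpa, by simp, ⟨w, by simp [hw, hwv]⟩, by simpa using fun b hb _ => h b hb⟩

lemma IsSeparation.insert_of_not_adj (h : G.IsSeparation s t) (hv : v ∉ s)
    (hvt : ∀ u ∈ t, ¬G.Adj v u) :
    G.IsSeparation (insert v s) t := by
  obtain ⟨hts, ht, -, hsep⟩ := h
  refine ⟨hts.trans (Finset.subset_insert v s), ht, ⟨v, by simpa using fun h => hv (hts h)⟩,
    fun a ha b hb hab => ?_⟩
  rcases Finset.mem_insert.1 (Finset.mem_sdiff.1 hb).1 with rfl | hbs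
  · exact hvt a ha hab.symm
  · exact hsep a ha b (Finset.mem_sdiff.2 ⟨hbs, (Finset.mem_sdiff.1 hb).2⟩) hab

lemma IsSeparation.insert_filter (h : G.IsSeparation s t) (hP4 : G.IsP4FreeOn (insert v s))
    (hv : v ∉ s) {u b : α} (hu : u ∈ t) (hvu : ¬G.Adj v u) (hb : b ∈ s \ t)
    (hvb : G.Adj v b) :
    G.IsSeparation (insert v s) (t.filter (¬G.Adj v ·)) := by
  obtain ⟨hts, -, -, hsep⟩ := h
  refine ⟨(Finset.filter_subset _ _).trans (hts.trans (Finset.subset_insert v s)),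
    ⟨u, Finset.mem_filter.2 ⟨hu, hvu⟩⟩, ⟨v, by simpa using fun h => hv (hts h)⟩,
    fun y hy x hx hyx => ?_⟩
  obtain ⟨hyt, hvy⟩ := Finset.mem_filter.1 hy
  obtain ⟨hx, hxt⟩ := Finset.mem_sdiff.1 hx
  rcases Finset.mem_insert.1 hx with rfl | hxs
  · exact hvy hyx.symm
  by_cases hxt' : x ∈ t
  · have hvx : G.Adj v x := by simpa [hxt'] using hxt
    have hbs := Finset.mem_sdiff.1 hb
    -- otherwise `y - x - v - b` is an induced path
    rcases hP4 y (by simp [hts hyt]) x (by simp [hxs]) v (by simp) b (by simp [hbs.1]) hyx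
      hvx.symm hvb with hyv | hxb | hyb
    · exact hvy hyv.symm
    · exact hsep x hxt' b hb hxb
    · exact hsep y hyt b hb hyb
  · exact hsep y hyt x (Finset.mem_sdiff.2 ⟨hxs, hxt'⟩) hyx

lemma IsP4FreeOn.exists_isSeparation_insert (hP4 : G.IsP4FreeOn (insert v s)) (hv : v ∉ s)
    (h : G.IsSeparation s t) :
    (∃ t, G.IsSeparation (insert v s) t) ∨ ∃ t, Gᶜ.IsSeparation (insert v s) t := by
  by_cases hall : ∀ u ∈ s, G.Adj v u
  · obtain ⟨w, hw⟩ := h.nonempty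
    refine Or.inr ⟨{v}, isSeparation_singleton (by simp) (by simp [h.subset hw])
      (fun hwv => hv (hwv ▸ h.subset hw)) fun u hu => ?_⟩
    rcases Finset.mem_insert.1 hu with rfl | hus
    · simp
    · simp [hall u hus]
  push Not at hall
  obtain ⟨u, hus, hvu⟩ := hall
  obtain ⟨t, h, hu⟩ : ∃ t, G.IsSeparation s t ∧ u ∈ t := by
    by_cases hut : u ∈ t
    · exact ⟨t, h, hut⟩
    · exact ⟨s \ t, h.sdiff, Finset.mem_sdiff.2 ⟨hus, hut⟩⟩
  left
  by_cases hb : ∃ b ∈ s \ t, G.Adj v b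
  · obtain ⟨b, hb, hvb⟩ := hb
    exact ⟨_, h.insert_filter hP4 hv hu hvu hb hvb⟩
  · push Not at hb
    exact ⟨_, h.sdiff.insert_of_not_adj hv hb⟩

/-- Seinsche's theorem. -/
theorem IsP4FreeOn.exists_isSeparation (hP4 : G.IsP4FreeOn s) (hs : 2 ≤ s.card) :
    (∃ t, G.IsSeparation s t) ∨ ∃ t, Gᶜ.IsSeparation s t := by
  induction s using Finset.induction_on with
  | empty => simp at hs
  | insert v s hv ih =>
    rw [Finset.card_insert_of_notMem hv] at hs
    by_cases hs2 : 2 ≤ s.card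
    · rcases ih (hP4.mono (Finset.subset_insert v s)) hs2 with ⟨t, ht⟩ | ⟨t, ht⟩
      · exact hP4.exists_isSeparation_insert hv ht
      · simpa only [compl_compl, or_comm] using hP4.compl.exists_isSeparation_insert hv ht
    · obtain ⟨w, rfl⟩ : ∃ w, s = {w} := Finset.card_eq_one.1 (by omega)
      have hwv : w ≠ v := fun h => hv (by simp [h])
      by_cases hvw : G.Adj v w
      · refine Or.inr ⟨{v}, isSeparation_singleton (by simp) (by simp) hwv fun u hu => ?_⟩
        rcases Finset.mem_insert.1 hu with rfl | hu
        · simp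
        · simp [Finset.mem_singleton.1 hu, hvw]
      · refine Or.inl ⟨{v}, isSeparation_singleton (by simp) (by simp) hwv fun u hu => ?_⟩
        rcases Finset.mem_insert.1 hu with rfl | hu
        · simp
        · simpa [Finset.mem_singleton.1 hu] using hvw

lemma IsAdjMatrixWithLoopsOn.mono {s' : Finset α} (h : G.IsAdjMatrixWithLoopsOn K s)
    (hs : s' ⊆ s) : G.IsAdjMatrixWithLoopsOn K s' :=
  fun i hi j hj => h i (hs hi) j (hs hj)

lemma IsAdjMatrixWithLoopsOn.compl (h : G.IsAdjMatrixWithLoopsOn K s) :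
    Gᶜ.IsAdjMatrixWithLoopsOn (fun i j => 1 - K i j) s := by
  intro i hi j hj
  obtain ⟨h01, hadj⟩ := h i hi j hj
  refine ⟨by rcases h01 with h | h <;> simp [h], fun hij => ?_⟩
  rw [compl_adj, hadj hij]
  rcases h01 with h | h <;> simp [h, hij]

lemma IsSeparation.sum_mul_eq (h : G.IsSeparation s t) (hK : G.IsAdjMatrixWithLoopsOn K s)
    {i : α} (hi : i ∈ t) : ∑ j ∈ s, K i j * μ j = ∑ j ∈ t, K i j * μ j := by
  rw [← Finset.sum_sdiff h.subset, add_eq_right]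
  refine Finset.sum_eq_zero fun j hj => ?_
  have hij : i ≠ j := fun hij => (Finset.mem_sdiff.1 hj).2 (hij ▸ hi)
  obtain ⟨h01, hadj⟩ := hK i (h.subset hi) j (Finset.mem_sdiff.1 hj).1
  rcases h01 with h0 | h1
  · simp [h0]
  · exact absurd ((hadj hij).2 h1) (h.not_adj i hi j hj)

end SimpleGraph

lemma exists_rat_eq_mul_add {d a b : ℝ} {p q : ℚ} (hp : d = p * a) (hq : d = q * b)
    (ha : 0 ≤ a) (hb : 0 ≤ b) : ∃ r : ℚ, d = r * (a + b) := by
  rcases eq_or_ne d 0 with hd | hd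
  · exact ⟨0, by simp [hd]⟩
  have hp0 : (p : ℝ) ≠ 0 := by rintro h; simp [h] at hp; exact hd hp
  have hq0 : (q : ℝ) ≠ 0 := by rintro h; simp [h] at hq; exact hd hq
  have hab : a + b = d * ((p : ℝ)⁻¹ + (q : ℝ)⁻¹) := by
    have ha' : a = d / p := by rw [hp]; field_simp
    have hb' : b = d / q := by rw [hq]; field_simp
    rw [ha', hb']
    ring
  have hpq : (p : ℝ)⁻¹ + (q : ℝ)⁻¹ ≠ 0 := by
    intro h
    rw [h, mul_zero] at hab
    exact hd (by rw [hp, show a = 0 by linarith, mul_zero])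
  refine ⟨(p⁻¹ + q⁻¹)⁻¹, ?_⟩
  push_cast
  rw [hab, mul_comm d, ← mul_assoc, inv_mul_cancel₀ hpq, one_mul]

theorem exists_rat_eq_mul_sum_of_isP4FreeOn {α : Type*} {G : SimpleGraph α}
    {K : α → α → ℝ} {μ : α → ℝ} {s : Finset α} {d : ℝ} (hs : s.Nonempty)
    (hμ : ∀ i ∈ s, 0 ≤ μ i) (hK : G.IsAdjMatrixWithLoopsOn K s) (hG : G.IsP4FreeOn s)
    (hreg : ∀ i ∈ s, ∑ j ∈ s, K i j * μ j = d) :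
    ∃ q : ℚ, d = q * ∑ j ∈ s, μ j := by
  induction s using Finset.strongInduction generalizing G K d with
  | H s ih =>
    have of_separation : ∀ {G : SimpleGraph α} {K : α → α → ℝ} {d : ℝ} {t : Finset α},
        G.IsAdjMatrixWithLoopsOn K s → G.IsP4FreeOn s →
        (∀ i ∈ s, ∑ j ∈ s, K i j * μ j = d) → G.IsSeparation s t →
        ∃ q : ℚ, d = q * ∑ j ∈ s, μ j := by
      intro G K d t hK hG hreg ht
      obtain ⟨p, hp⟩ := ih t ht.ssubset ht.nonempty (fun i hi => hμ i (ht.subset hi))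
        (hK.mono ht.subset) (hG.mono ht.subset)
        fun i hi => (ht.sum_mul_eq hK hi).symm.trans (hreg i (ht.subset hi))
      obtain ⟨q, hq⟩ := ih (s \ t) ht.sdiff.ssubset ht.sdiff_nonempty
        (fun i hi => hμ i (Finset.sdiff_subset hi)) (hK.mono Finset.sdiff_subset)
        (hG.mono Finset.sdiff_subset)
        fun i hi => (ht.sdiff.sum_mul_eq hK hi).symm.trans (hreg i (Finset.sdiff_subset hi))
      rw [← Finset.sum_sdiff ht.subset]
      exact exists_rat_eq_mul_add hq hp
        (Finset.sum_nonneg fun i hi => hμ i (Finset.sdiff_subset hi))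
        (Finset.sum_nonneg fun i hi => hμ i (ht.subset hi))
    rcases Nat.lt_or_ge s.card 2 with hs1 | hs2
    · obtain ⟨i, rfl⟩ : ∃ i, s = {i} := Finset.card_eq_one.1 (by have := hs.card_pos; omega)
      have hd := hreg i (by simp)
      rw [Finset.sum_singleton] at hd ⊢
      rcases (hK i (by simp) i (by simp)).1 with h | h
      · exact ⟨0, by simp [← hd, h]⟩
      · exact ⟨1, by simp [← hd, h]⟩
    rcases hG.exists_isSeparation hs2 with ⟨t, ht⟩ | ⟨t, ht⟩
    · exact of_separation hK hG hreg ht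
    · -- Complementing `K` turns a join into a disjoint union.
      have hreg' : ∀ i ∈ s, ∑ j ∈ s, (1 - K i j) * μ j = ∑ j ∈ s, μ j - d := by
        intro i hi
        simp only [sub_mul, one_mul, Finset.sum_sub_distrib, hreg i hi]
      obtain ⟨q, hq⟩ := of_separation hK.compl hG.compl hreg' ht
      exact ⟨1 - q, by push_cast; linarith⟩

def inducedP4Weight {β : Type*} (W : β → β → ℝ) (a b c d : β) : ℝ :=
  W a b * W b c * W c d * (1 - W a c) * (1 - W b d) * (1 - W a d)

section Pattern

variable {α : Type*} {K : α → α → ℝ} {s : Finset α}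

lemma eq_zero_or_eq_one_of_inducedP4Weight_eq_zero (hsymm : ∀ i ∈ s, ∀ j ∈ s, K i j = K j i)
    (hP4 : ∀ a ∈ s, ∀ b ∈ s, ∀ c ∈ s, ∀ d ∈ s, inducedP4Weight K a b c d = 0) :
    ∀ i ∈ s, ∀ j ∈ s, K i j = 0 ∨ K i j = 1 := by
  have diag : ∀ i ∈ s, K i i = 0 ∨ K i i = 1 := by
    intro i hi
    have := hP4 i hi i hi i hi i hi
    simp [inducedP4Weight] at this
    grind
  intro i hi j hj
  have h1 := hP4 i hi j hj i hi j hj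
  have h2 := hP4 i hi j hj j hj i hi
  have h3 := hP4 j hj i hi i hi j hj
  have h4 := hP4 i hi i hi j hj j hj
  simp only [inducedP4Weight, hsymm j hj i hi] at h1 h2 h3 h4
  -- Whatever `K i i` and `K j j` are, one of these quadruples has all its diagonal factors
  -- equal to `1`, leaving `K i j ^ m * (1 - K i j) ^ n = 0`.
  rcases diag i hi with hii | hii <;> rcases diag j hj with hjj | hjj <;>
    simp_all <;> grind

open SimpleGraph in
lemma isAdjMatrixWithLoopsOn_fromRel (hsymm : ∀ i ∈ s, ∀ j ∈ s, K i j = K j i)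
    (h01 : ∀ i ∈ s, ∀ j ∈ s, K i j = 0 ∨ K i j = 1) :
    (fromRel fun i j => K i j = 1).IsAdjMatrixWithLoopsOn K s :=
  fun i hi j hj => ⟨h01 i hi j hj, fun hij => by simp [hij, hsymm j hj i hi]⟩

open SimpleGraph in
lemma isP4FreeOn_fromRel (hsymm : ∀ i ∈ s, ∀ j ∈ s, K i j = K j i)
    (hP4 : ∀ a ∈ s, ∀ b ∈ s, ∀ c ∈ s, ∀ d ∈ s, inducedP4Weight K a b c d = 0) :
    (fromRel fun i j => K i j = 1).IsP4FreeOn s := by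
  intro a ha b hb c hc d hd hab hbc hcd
  simp only [fromRel_adj, hsymm b hb a ha, hsymm c hc b hb, hsymm d hd c hc, hsymm c hc a ha,
    hsymm d hd b hb, hsymm d hd a ha, or_self] at *
  have h := hP4 a ha b hb c hc d hd
  simp only [inducedP4Weight, hab.2, hbc.2, hcd.2, one_mul, mul_eq_zero, sub_eq_zero] at h
  grind

end Pattern

theorem exists_rat_eq_mul_sum_of_inducedP4Weight_eq_zero {α : Type*} {K : α → α → ℝ}
    {μ : α → ℝ} {s : Finset α} {d : ℝ} (hs : s.Nonempty) (hμ : ∀ i ∈ s, 0 ≤ μ i)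
    (hsymm : ∀ i ∈ s, ∀ j ∈ s, K i j = K j i)
    (hP4 : ∀ a ∈ s, ∀ b ∈ s, ∀ c ∈ s, ∀ d ∈ s, inducedP4Weight K a b c d = 0)
    (hreg : ∀ i ∈ s, ∑ j ∈ s, K i j * μ j = d) : ∃ q : ℚ, d = q * ∑ j ∈ s, μ j :=
  exists_rat_eq_mul_sum_of_isP4FreeOn hs hμ
    (isAdjMatrixWithLoopsOn_fromRel hsymm
      (eq_zero_or_eq_one_of_inducedP4Weight_eq_zero hsymm hP4))
    (isP4FreeOn_fromRel hsymm hP4) hreg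

section Measure

variable {β : Type*} [MeasureSpace β]

lemma ae_ae_fin_cons [SigmaFinite (volume : Measure β)] {n : ℕ}
    {p : (Fin (n + 1) → β) → Prop} (h : ∀ᵐ x, p x) :
    ∀ᵐ a, ∀ᵐ y, p (Fin.cons a y) := by
  have h' := (volume_preserving_piFinSuccAbove (fun _ => β) 0).symm.quasiMeasurePreserving.ae h
  rw [Measure.volume_eq_prod] at h'
  refine (Measure.ae_ae_of_ae_prod h').mono fun a ha => ha.mono fun y hy => ?_
  simpa [MeasurableEquiv.piFinSuccAbove_symm_apply, Fin.insertNth_zero', Fin.consEquiv] using hy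

lemma ae_fin_one {p : (Fin 1 → β) → Prop} (h : ∀ᵐ x, p x) : ∀ᵐ a, p ![a] := by
  refine ((volume_preserving_funUnique (Fin 1) β).symm.quasiMeasurePreserving.ae h).mono
    fun a ha => ?_
  convert ha using 2
  ext i
  simp [Subsingleton.elim i 0]

lemma ae_ae_ae_ae_fin_four [SigmaFinite (volume : Measure β)] {p : (Fin 4 → β) → Prop}
    (h : ∀ᵐ x, p x) :
    ∀ᵐ a, ∀ᵐ b, ∀ᵐ c, ∀ᵐ d, p ![a, b, c, d] :=
  (ae_ae_fin_cons h).mono fun _ ha => (ae_ae_fin_cons ha).mono fun _ hb =>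
    (ae_ae_fin_cons hb).mono fun _ hc => ae_fin_one hc

variable {α γ : Type*} [MeasurableSpace α] [MeasurableSpace γ] {μ : Measure α}

lemma ae_ae_restrict_of_ae_restrict_prod {ν : Measure γ} [SFinite μ] [SFinite ν] {s : Set α}
    {t : Set γ} {p : α × γ → Prop} (h : ∀ᵐ q ∂(μ.prod ν).restrict (s ×ˢ t), p q) :
    ∀ᵐ x ∂μ.restrict s, ∀ᵐ y ∂ν.restrict t, p (x, y) := by
  rw [← Measure.prod_restrict] at h
  exact Measure.ae_ae_of_ae_prod h

lemma eq_of_ae_ae_restrict [SFinite μ] {W : α → α → ℝ} {s t : Set α} {a b : ℝ}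
    (hW : Measurable (Function.uncurry W)) (hs : MeasurableSet s) (ht : MeasurableSet t)
    (hs0 : μ s ≠ 0) (ht0 : μ t ≠ 0) (hsymm : ∀ x ∈ s, ∀ y ∈ t, W x y = W y x)
    (hst : ∀ᵐ x ∂μ.restrict s, ∀ᵐ y ∂μ.restrict t, W x y = a)
    (hts : ∀ᵐ y ∂μ.restrict t, ∀ᵐ x ∂μ.restrict s, W y x = b) : a = b := by
  have := ae_restrict_neBot.2 hs0
  have := ae_restrict_neBot.2 ht0
  have hst' := (Measure.ae_ae_comm (p := fun x y => W x y = a)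
    (measurableSet_eq_fun hW measurable_const)).1 hst
  obtain ⟨y, hy, hy', hyt⟩ := (hst'.and (hts.and (ae_restrict_mem ht))).exists
  obtain ⟨x, hx, hx', hxs⟩ := (hy.and (hy'.and (ae_restrict_mem hs))).exists
  rw [← hx, ← hx', hsymm x hxs y hyt]

lemma integral_iUnion_eq_sum_mul_measureReal {ι : Type*} [Fintype ι] {S : ι → Set α}
    (hSm : ∀ i, MeasurableSet (S i)) (hdisj : Pairwise fun i j => Disjoint (S i) (S j))
    {f : α → ℝ} (hf : IntegrableOn f (⋃ i, S i) μ) {c : ι → ℝ}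
    (hc : ∀ i, ∀ᵐ y ∂μ.restrict (S i), f y = c i) :
    ∫ y in ⋃ i, S i, f y ∂μ = ∑ i, c i * μ.real (S i) := by
  rw [integral_iUnion hSm hdisj hf, tsum_fintype]
  refine Finset.sum_congr rfl fun i _ => ?_
  rw [integral_congr_ae (hc i), setIntegral_const, smul_eq_mul, mul_comm]

end Measure

lemma inducedP4Weight_mem_Icc {β : Type*} {W : β → β → ℝ} {U : Set β}
    (hW : ∀ x ∈ U, ∀ y ∈ U, W x y ∈ Set.Icc (0 : ℝ) 1) {a b c d : β} (ha : a ∈ U)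
    (hb : b ∈ U) (hc : c ∈ U) (hd : d ∈ U) : inducedP4Weight W a b c d ∈ Set.Icc (0 : ℝ) 1 := by
  have h1 : ∀ {x y}, x ∈ U → y ∈ U → 1 - W x y ∈ Set.Icc (0 : ℝ) 1 :=
    fun hx hy => Set.Icc.mem_iff_one_sub_mem.1 (hW _ hx _ hy)
  unfold inducedP4Weight
  exact unitInterval.mul_mem (unitInterval.mul_mem (unitInterval.mul_mem (unitInterval.mul_mem
    (unitInterval.mul_mem (hW a ha b hb) (hW b hb c hc)) (hW c hc d hd)) (h1 ha hc)) (h1 hb hd))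
    (h1 ha hd)

namespace memW0

variable {W : ℝ → ℝ → ℝ}

lemma integrableOn (hW : memW0 W) {x : ℝ} (hx : x ∈ I01) : IntegrableOn (W x) I01 := by
  refine Measure.integrableOn_of_bounded (M := 1) (by simp [I01])
    hW.1.of_uncurry_left.aestronglyMeasurable ?_
  filter_upwards [ae_restrict_mem measurableSet_Icc] with y hy
  have h01 := hW.2.2 x hx y hy
  rw [Real.norm_eq_abs, abs_le]
  exact ⟨by linarith [h01.1], h01.2⟩

lemma ae_inducedP4Weight_eq_zero (hW : memW0 W)
    (hP4 : ∫ x in cube 4, inducedP4Weight W (x 0) (x 1) (x 2) (x 3) = 0) :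
    ∀ᵐ a, ∀ᵐ b, ∀ᵐ c, ∀ᵐ d, a ∈ I01 → b ∈ I01 → c ∈ I01 → d ∈ I01 →
      inducedP4Weight W a b c d = 0 := by
  have hcube : MeasurableSet (cube 4) := MeasurableSet.univ_pi fun _ => measurableSet_Icc
  have hpair (a b : Fin 4) : Measurable fun x : Fin 4 → ℝ => W (x a) (x b) :=
    hW.1.comp ((measurable_pi_apply a).prodMk (measurable_pi_apply b) :
      Measurable fun x : Fin 4 → ℝ => (x a, x b))
  have hmem : ∀ᵐ x ∂volume.restrict (cube 4),
      inducedP4Weight W (x 0) (x 1) (x 2) (x 3) ∈ Set.Icc (0 : ℝ) 1 := by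
    filter_upwards [ae_restrict_mem hcube] with x hx
    exact inducedP4Weight_mem_Icc hW.2.2 (hx 0 trivial) (hx 1 trivial) (hx 2 trivial)
      (hx 3 trivial)
  have hint : IntegrableOn (fun x => inducedP4Weight W (x 0) (x 1) (x 2) (x 3)) (cube 4) := by
    have hcompact : IsCompact (cube 4) := isCompact_univ_pi fun _ => isCompact_Icc
    refine Measure.integrableOn_of_bounded (M := 1) hcompact.measure_lt_top.ne
      (Measurable.aestronglyMeasurable ?_) ?_
    · exact (((((hpair 0 1).mul (hpair 1 2)).mul (hpair 2 3)).mul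
        (measurable_const.sub (hpair 0 2))).mul (measurable_const.sub (hpair 1 3))).mul
        (measurable_const.sub (hpair 0 3))
    · filter_upwards [hmem] with x hx
      rw [Real.norm_eq_abs, abs_le]
      exact ⟨by linarith [hx.1], hx.2⟩
  have hzero := (integral_eq_zero_iff_of_nonneg_ae (hmem.mono fun _ hx => hx.1) hint).1 hP4
  refine (ae_ae_ae_ae_fin_four ((ae_restrict_iff' hcube).1 hzero)).mono fun a ha => ?_
  refine ha.mono fun b hb => hb.mono fun c hc => hc.mono fun d hd => ?_
  intro haI hbI hcI hdI
  exact hd fun i _ => by fin_cases i <;> assumption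

end memW0

section Stepfunction

variable {ι : Type*} {W : ℝ → ℝ → ℝ} {S : ι → Set ℝ} {K : ι → ι → ℝ}

lemma memW0.sum_mul_measureReal_eq [Fintype ι] {d : ℝ} (hW : memW0 W)
    (hSm : ∀ i, MeasurableSet (S i)) (hdisj : Pairwise fun i j => Disjoint (S i) (S j))
    (hunion : ⋃ i, S i = I01)
    (hK : ∀ i j, ∀ᵐ x ∂volume.restrict (S i), ∀ᵐ y ∂volume.restrict (S j), W x y = K i j)
    (hreg : ∀ᵐ x ∂volume.restrict I01, ∫ y in I01, W x y = d) {i : ι}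
    (hi : volume (S i) ≠ 0) : ∑ j, K i j * volume.real (S j) = d := by
  have := ae_restrict_neBot.2 hi
  have hSi : S i ⊆ I01 := hunion ▸ Set.subset_iUnion S i
  obtain ⟨x, hx, hxK, hxS⟩ := ((ae_restrict_of_ae_restrict_of_subset hSi hreg).and
    ((ae_all_iff.2 (hK i)).and (ae_restrict_mem (hSm i)))).exists
  rw [← hx, ← hunion,
    integral_iUnion_eq_sum_mul_measureReal hSm hdisj (hunion ▸ hW.integrableOn (hSi hxS)) hxK]

lemma inducedP4Weight_eq_zero_of_ae (hS : ∀ i, S i ⊆ I01) (hSm : ∀ i, MeasurableSet (S i))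
    (hK : ∀ i j, ∀ᵐ x ∂volume.restrict (S i), ∀ᵐ y ∂volume.restrict (S j), W x y = K i j)
    (hP4 : ∀ᵐ a, ∀ᵐ b, ∀ᵐ c, ∀ᵐ d, a ∈ I01 → b ∈ I01 → c ∈ I01 → d ∈ I01 →
      inducedP4Weight W a b c d = 0)
    {i j k l : ι} (hi : volume (S i) ≠ 0) (hj : volume (S j) ≠ 0) (hk : volume (S k) ≠ 0)
    (hl : volume (S l) ≠ 0) : inducedP4Weight K i j k l = 0 := by
  have := ae_restrict_neBot.2 hi
  have := ae_restrict_neBot.2 hj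
  have := ae_restrict_neBot.2 hk
  have := ae_restrict_neBot.2 hl
  have hI (m : ι) : ∀ᵐ x ∂volume.restrict (S m), x ∈ I01 :=
    (ae_restrict_mem (hSm m)).mono fun x hx => hS m hx
  have h : ∀ᵐ _ ∂volume.restrict (S i), ∀ᵐ _ ∂volume.restrict (S j),
      ∀ᵐ _ ∂volume.restrict (S k), ∀ᵐ _ ∂volume.restrict (S l),
        inducedP4Weight K i j k l = 0 := by
    filter_upwards [ae_restrict_of_ae hP4, hI i, hK i j, hK i k, hK i l] with a ha haI hab hac had
    filter_upwards [ae_restrict_of_ae ha, hI j, hab, hK j k, hK j l] with b hb hbI hab hbc hbd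
    filter_upwards [ae_restrict_of_ae hb, hI k, hac, hbc, hK k l] with c hc hcI hac hbc hcd
    filter_upwards [ae_restrict_of_ae hc, hI l, had, hbd, hcd] with d hd hdI had hbd hcd
    simpa only [inducedP4Weight, hab, hbc, hcd, hac, hbd, had] using hd haI hbI hcI hdI
  simpa only [Filter.eventually_const] using h

end Stepfunction

/-- a `d`-regular stepfunction graphon whose induced-`P₄` density
vanishes (a complement-reducible graphon) has rational degree `d`. -/
theorem statement13 (W : ℝ → ℝ → ℝ) (hW : memW0 W) (hstep : IsStepfunction W)
    (d : ℝ) (hreg : ∀ᵐ x ∂(volume.restrict I01), (∫ y in I01, W x y) = d)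
    (hP4 : (∫ x in cube 4,
      W (x 0) (x 1) * W (x 1) (x 2) * W (x 2) (x 3) *
        (1 - W (x 0) (x 2)) * (1 - W (x 1) (x 3)) * (1 - W (x 0) (x 3))) = 0) :
    ∃ q : ℚ, d = (q : ℝ) := by
  obtain ⟨n, S, hSm, hdisj, hunion, hconst⟩ := hstep
  choose K hK using hconst
  replace hK (i j : Fin n) :
      ∀ᵐ x ∂volume.restrict (S i), ∀ᵐ y ∂volume.restrict (S j), W x y = K i j :=
    ae_ae_restrict_of_ae_restrict_prod (hK i j)
  have hS (i : Fin n) : S i ⊆ I01 := hunion ▸ Set.subset_iUnion S i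
  set μ : Fin n → ℝ := fun i => volume.real (S i)
  -- Null classes carry no information about `W`; they are discarded.
  set V := Finset.univ.filter fun i => μ i ≠ 0
  have hV (i : Fin n) (hi : i ∈ V) : volume (S i) ≠ 0 := fun h0 =>
    (Finset.mem_filter.1 hi).2 (by simp [μ, Measure.real, h0])
  have hsum (f : Fin n → ℝ) : ∑ j ∈ V, f j * μ j = ∑ j, f j * μ j :=
    Finset.sum_filter_of_ne fun j _ h => right_ne_zero_of_mul h
  have htot : ∑ j ∈ V, μ j = 1 := by
    have hfin (i : Fin n) : volume (S i) ≠ ⊤ :=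
      ne_top_of_le_ne_top (by simp [I01]) (measure_mono (hS i))
    simpa [μ, ← measureReal_iUnion_fintype hdisj hSm hfin, hunion, I01] using hsum 1
  have hP4' := hW.ae_inducedP4Weight_eq_zero hP4
  obtain ⟨q, hq⟩ := exists_rat_eq_mul_sum_of_inducedP4Weight_eq_zero (K := K) (d := d)
    (Finset.nonempty_of_sum_ne_zero (htot ▸ one_ne_zero)) (fun i _ => measureReal_nonneg)
    (fun i hi j hj => eq_of_ae_ae_restrict hW.1 (hSm i) (hSm j) (hV i hi) (hV j hj)
      (fun x hx y hy => hW.2.1 x (hS i hx) y (hS j hy)) (hK i j) (hK j i))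
    (fun a ha b hb c hc e he =>
      inducedP4Weight_eq_zero_of_ae hS hSm hK hP4' (hV a ha) (hV b hb) (hV c hc) (hV e he))
    (fun i hi => (hsum (K i)).trans (hW.sum_mul_measureReal_eq hSm hdisj hunion hK hreg (hV i hi)))
  exact ⟨q, by rw [hq, htot, mul_one]⟩
end
end

section
/- Let W ∈ 𝒲 have finite rank, i.e. W(x,y) = Σ_{k=1}^r λ_k w_k(x) w_k(y) for almost every (x,y) ∈ [0,1]², for some r ∈ ℕ, real numbers λ₁,…,λ_r and bounded measurable functions w₁,…,w_r : [0,1] → ℝ. Then for every finite list F₁,…,F_m of finite simple graphs there exists a stepfunction U ∈ 𝒲 such that t(F_j,U) = t(F_j,W) for j = 1,…,m. -/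
open MeasureTheory
open scoped Classical

noncomputable section

/-!
Expanding the product over the edges of `F`, the density `t(F, ∑ₖ λₖ wₖ ⊗ wₖ)` becomes a
polynomial in finitely many mixed moments `∫ ∏ₖ wₖ ^ αₖ` of the family `w`. The vector of these
moments is the integral of `ψ (w x)`, where `ψ z = (∏ₖ zₖ ^ αₖ)_α`, so it lies in the convex hull
of the compact set `ψ '' [-C, C]ʳ` (`C` a bound for the `wₖ`); by Carathéodory it is a finite
convex combination `∑ᵢ pᵢ ψ(vᵢ)`. Cutting `[0,1]` into intervals of lengths `pᵢ` and letting the family take the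
value `vᵢ` on the `i`-th interval gives a step family with the same moments, hence a rank-`r`
stepfunction with the same densities.
-/

open Finset ProbabilityTheory

instance inst_s18 : IsProbabilityMeasure (volume.restrict I01) :=
  ⟨by simp [I01]⟩

lemma volume_restrict_cube (n : ℕ) :
    volume.restrict (cube n) = Measure.pi fun _ : Fin n => volume.restrict I01 := by
  rw [cube, volume_pi, Measure.restrict_pi_pi]

lemma MeasureTheory.Measure.pi_map_pair {ι α : Type*} [Fintype ι] [MeasurableSpace α]
    {μ : Measure α} [IsProbabilityMeasure μ] {i j : ι} (hij : i ≠ j) :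
    (Measure.pi fun _ : ι => μ).map (fun x => (x i, x j)) = μ.prod μ := by
  have hind : IndepFun (fun x : ι → α => x i) (fun x => x j) (Measure.pi fun _ => μ) :=
    (iIndepFun_pi (μ := fun _ : ι => μ) (X := fun _ => id) fun _ => aemeasurable_id).indepFun hij
  rw [(indepFun_iff_map_prod_eq_prod_map_map (measurable_pi_apply i).aemeasurable
      (measurable_pi_apply j).aemeasurable).1 hind,
    (measurePreserving_eval _ i).map_eq, (measurePreserving_eval _ j).map_eq]

def edgePairs {n : ℕ} (G : SimpleGraph (Fin n)) : Finset (Fin n × Fin n) :=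
  univ.filter fun p => p.1 < p.2 ∧ G.Adj p.1 p.2

lemma homDensity_eq_integral_pi {n : ℕ} (G : SimpleGraph (Fin n)) (W : ℝ → ℝ → ℝ) :
    homDensity G W = ∫ x, ∏ p ∈ edgePairs G, W (x p.1) (x p.2)
      ∂(Measure.pi fun _ => volume.restrict I01) := by
  rw [homDensity, volume_restrict_cube]; rfl

lemma homDensity_congr_ae {n : ℕ} (G : SimpleGraph (Fin n)) {W V : ℝ → ℝ → ℝ}
    (h : ∀ᵐ q : ℝ × ℝ ∂(volume.restrict (I01 ×ˢ I01)), W q.1 q.2 = V q.1 q.2) :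
    homDensity G W = homDensity G V := by
  rw [Measure.volume_eq_prod, ← Measure.prod_restrict] at h
  simp_rw [homDensity_eq_integral_pi]
  refine integral_congr_ae ?_
  have hedge : ∀ᵐ x ∂(Measure.pi fun _ => volume.restrict I01),
      ∀ p ∈ edgePairs G, W (x p.1) (x p.2) = V (x p.1) (x p.2) := by
    refine (Finset.eventually_all _).2 fun p hp => ?_
    have hne : p.1 ≠ p.2 := (mem_filter.1 hp).2.1.ne
    rw [← Measure.pi_map_pair hne] at h
    exact ae_of_ae_map (by fun_prop) h
  filter_upwards [hedge] with x hx using prod_congr rfl hx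

def rankKernel {r : ℕ} (lam : Fin r → ℝ) (u : Fin r → ℝ → ℝ) (x y : ℝ) : ℝ :=
  ∑ k, lam k * u k x * u k y

def mixedMoment {r : ℕ} (u : Fin r → ℝ → ℝ) (α : Fin r → ℕ) : ℝ :=
  ∫ y in I01, ∏ k, u k y ^ α k

def colorDegree {n r : ℕ} (G : SimpleGraph (Fin n)) (c : edgePairs G → Fin r) (v : Fin n)
    (k : Fin r) : ℕ :=
  #{e | (e.1.1, c e) = (v, k)} + #{e | (e.1.2, c e) = (v, k)}

lemma Finset.prod_comp_eq_prod_pow_card {ι κ M : Type*} [Fintype κ] [DecidableEq κ]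
    [CommMonoid M] (s : Finset ι) (g : ι → κ) (f : κ → M) :
    ∏ i ∈ s, f (g i) = ∏ j, f j ^ #{i ∈ s | g i = j} := by
  simp_rw [← prod_fiberwise' s g f, prod_const]

section FiniteRank

variable {n r : ℕ} (G : SimpleGraph (Fin n))

lemma prod_edgePairs_eq_prod_pow_colorDegree (c : edgePairs G → Fin r) (f : Fin n → Fin r → ℝ) :
    ∏ e : edgePairs G, f e.1.1 (c e) * f e.1.2 (c e) = ∏ v, ∏ k, f v k ^ colorDegree G c v k := by
  have hend (π : edgePairs G → Fin n) :
      ∏ e, f (π e) (c e) = ∏ v, ∏ k, f v k ^ #{e | (π e, c e) = (v, k)} :=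
    (prod_comp_eq_prod_pow_card univ (fun e => (π e, c e)) (Function.uncurry f)).trans
      (Fintype.prod_prod_type _)
  simp_rw [colorDegree, pow_add, prod_mul_distrib, hend]

lemma prod_rankKernel (lam : Fin r → ℝ) (u : Fin r → ℝ → ℝ) (x : Fin n → ℝ) :
    ∏ p ∈ edgePairs G, rankKernel lam u (x p.1) (x p.2)
      = ∑ c : edgePairs G → Fin r,
          (∏ e, lam (c e)) * ∏ v, ∏ k, u k (x v) ^ colorDegree G c v k := by
  simp only [rankKernel]
  rw [← prod_coe_sort, Fintype.prod_sum]
  refine sum_congr rfl fun c _ => ?_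
  rw [← prod_edgePairs_eq_prod_pow_colorDegree, ← prod_mul_distrib]
  exact prod_congr rfl fun e _ => by ring

lemma integrable_prod_pow {X : Type*} [MeasurableSpace X] {μ : Measure X} [IsFiniteMeasure μ]
    {u : Fin r → X → ℝ} (hum : ∀ k, Measurable (u k)) {C : Fin r → ℝ}
    (hC : ∀ k x, |u k x| ≤ C k) (α : Fin r → ℕ) :
    Integrable (fun y => ∏ k, u k y ^ α k) μ := by
  refine .of_bound (by fun_prop) (∏ k, C k ^ α k) (ae_of_all _ fun y => ?_)
  rw [Real.norm_eq_abs, abs_prod]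
  gcongr with k
  rw [abs_pow]
  gcongr
  exact hC k y

lemma homDensity_rankKernel (lam : Fin r → ℝ) {u : Fin r → ℝ → ℝ}
    (hum : ∀ k, Measurable (u k)) {C : Fin r → ℝ} (hC : ∀ k x, |u k x| ≤ C k) :
    homDensity G (rankKernel lam u)
      = ∑ c : edgePairs G → Fin r, (∏ e, lam (c e)) * ∏ v, mixedMoment u (colorDegree G c v) := by
  rw [homDensity_eq_integral_pi]
  simp_rw [prod_rankKernel]
  rw [integral_finsetSum _ fun c _ =>
    (Integrable.fintype_prod fun v => integrable_prod_pow hum hC _).const_mul _]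
  refine sum_congr rfl fun c _ => ?_
  rw [integral_const_mul,
    integral_fintype_prod_eq_prod (fun v y => ∏ k, u k y ^ colorDegree G c v k)]
  rfl

end FiniteRank

open Module in
lemma exists_stdSimplex_sum_smul_eq_of_mem_convexHull {E : Type*} [AddCommGroup E]
    [Module ℝ E] [FiniteDimensional ℝ E] {s : Set E} {x : E} (hx : x ∈ convexHull ℝ s) :
    ∃ w ∈ stdSimplex ℝ (Fin (finrank ℝ E + 1)), ∃ z : Fin (finrank ℝ E + 1) → E,
      (∀ i, z i ∈ s) ∧ ∑ i, w i • z i = x := by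
  obtain ⟨ι, _, z, w, hzs, hind, hw0, hw1, rfl⟩ := eq_pos_convex_span_of_mem_convexHull hx
  obtain ⟨e⟩ : Nonempty (ι ↪ Fin (finrank ℝ E + 1)) := Function.Embedding.nonempty_of_card_le <| by
    simpa using hind.card_le_finrank_succ.trans (Nat.succ_le_succ (Submodule.finrank_le _))
  obtain ⟨i₀⟩ : Nonempty ι := by
    by_contra h
    simp [not_nonempty_iff.1 h] at hw1
  -- pad the Carathéodory combination with the point `z i₀` at weight `0`
  set w' := Function.extend e w fun _ => 0
  set z' := Function.extend e z fun _ => z i₀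
  have hw'_out (j) (hj : j ∉ Set.range e) : w' j = 0 := Function.extend_apply' _ _ _ hj
  refine ⟨w', ⟨fun j => ?_, ?_⟩, z', fun j => ?_, ?_⟩
  · by_cases hj : ∃ i, e i = j
    · obtain ⟨i, rfl⟩ := hj
      simpa [w', e.injective.extend_apply] using (hw0 i).le
    · simp [hw'_out j (by simpa using hj)]
  · rw [← hw1]
    exact (Fintype.sum_of_injective e e.injective w w' hw'_out
      fun i => (e.injective.extend_apply _ _ _).symm).symm
  · by_cases hj : ∃ i, e i = j
    · obtain ⟨i, rfl⟩ := hj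
      simpa [z', e.injective.extend_apply] using hzs ⟨i, rfl⟩
    · simpa [z', Function.extend_apply' _ _ _ hj] using hzs ⟨i₀, rfl⟩
  · refine (Fintype.sum_of_injective e e.injective _ _ (fun j hj => ?_) fun i => ?_).symm
    · simp [hw'_out j hj]
    · simp [w', z', e.injective.extend_apply]

theorem isCompact_convexHull {E : Type*} [NormedAddCommGroup E] [NormedSpace ℝ E]
    [FiniteDimensional ℝ E] {s : Set E} (hs : IsCompact s) : IsCompact (convexHull ℝ s) := by
  have himage : convexHull ℝ s = (fun wz : (Fin (Module.finrank ℝ E + 1) → ℝ) × (_ → E) =>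
      ∑ i, wz.1 i • wz.2 i) '' (stdSimplex ℝ _ ×ˢ Set.univ.pi fun _ => s) := by
    refine subset_antisymm (fun x hx => ?_) ?_
    · obtain ⟨w, hw, z, hz, rfl⟩ := exists_stdSimplex_sum_smul_eq_of_mem_convexHull hx
      exact ⟨(w, z), ⟨hw, fun i _ => hz i⟩, rfl⟩
    · rintro _ ⟨⟨w, z⟩, ⟨hw, hz⟩, rfl⟩
      exact (convex_convexHull ℝ s).sum_mem (fun i _ => hw.1 i) hw.2
        fun i _ => subset_convexHull ℝ s (hz i trivial)
  rw [himage]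
  exact ((isCompact_stdSimplex _ _).prod (isCompact_univ_pi fun _ => hs)).image (by fun_prop)

lemma integral_mem_convexHull {X E : Type*} [MeasurableSpace X] {μ : Measure X}
    [IsProbabilityMeasure μ] [NormedAddCommGroup E] [NormedSpace ℝ E] [FiniteDimensional ℝ E]
    {K : Set E} (hK : IsCompact K) {f : X → E} (hf : AEStronglyMeasurable f μ)
    (hfK : ∀ x, f x ∈ K) : ∫ x, f x ∂μ ∈ convexHull ℝ K := by
  obtain ⟨R, hR⟩ := hK.isBounded.exists_norm_le
  exact (convex_convexHull ℝ K).integral_mem (isCompact_convexHull hK).isClosed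
    (ae_of_all _ fun x => subset_convexHull ℝ K (hfK x))
    (.of_bound hf R (ae_of_all _ fun x => hR _ (hfK x)))

def IsMeasurablePartition {ι α : Type*} [MeasurableSpace α] (S : ι → Set α) (A : Set α) :
    Prop :=
  (∀ i, MeasurableSet (S i)) ∧ (Pairwise fun i j => Disjoint (S i) (S j)) ∧ ⋃ i, S i = A

open Set in
lemma exists_measurablePartition_Icc (N : ℕ) (a : ℝ) {p : Fin (N + 1) → ℝ}
    (hp : ∀ i, 0 ≤ p i) : ∃ S : Fin (N + 1) → Set ℝ,
      IsMeasurablePartition S (Icc a (a + ∑ i, p i)) ∧ ∀ i, volume (S i) = .ofReal (p i) := by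
  induction N generalizing a with
  | zero =>
    refine ⟨fun _ => Icc a (a + p 0), ⟨fun _ => measurableSet_Icc,
      fun i j hij => (hij (i.eq_zero.trans j.eq_zero.symm)).elim,
      by rw [Fin.sum_univ_one]; exact iUnion_const _⟩, fun i => ?_⟩
    rw [Real.volume_Icc, i.eq_zero, add_sub_cancel_left]
  | succ N ih =>
    obtain ⟨S, ⟨hSm, hSd, hSU⟩, hSvol⟩ := ih (a + p 0) (p := fun i => p i.succ) fun i => hp _
    have hSsub (i : Fin (N + 1)) : S i ⊆ Icc (a + p 0) (a + p 0 + ∑ j : Fin (N + 1), p j.succ) :=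
      hSU ▸ subset_iUnion S i
    refine ⟨Fin.cons (Ico a (a + p 0)) S, ⟨Fin.cases measurableSet_Ico hSm, ?_, ?_⟩,
      Fin.cases (by simp [Real.volume_Ico]) hSvol⟩
    · have hdisj (i) : Disjoint (Ico a (a + p 0)) (S i) :=
        disjoint_left.2 fun x hx hx' => (hSsub i hx').1.not_gt hx.2
      exact pairwise_fin_succ_iff.2 ⟨fun i => (hdisj i).symm, hdisj, fun i j hij => hSd hij⟩
    · ext x
      rw [Fin.sum_univ_succ, ← add_assoc, ← Ico_union_Icc_eq_Icc (le_add_of_nonneg_right (hp 0))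
        (le_add_of_nonneg_right (sum_nonneg fun i _ => hp _)), ← hSU]
      simp only [mem_iUnion, Fin.exists_fin_succ, Fin.cons_zero, Fin.cons_succ, mem_union]

def stepFamily {N r : ℕ} (S : Fin N → Set ℝ) (v : Fin N → Fin r → ℝ) (k : Fin r) (x : ℝ) : ℝ :=
  ∑ i, (S i).indicator (fun _ => v i k) x

section StepFamily

variable {N r : ℕ} {S : Fin N → Set ℝ} (v : Fin N → Fin r → ℝ)

lemma stepFamily_of_mem (hS : Pairwise fun i j => Disjoint (S i) (S j)) {i : Fin N} {x : ℝ}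
    (hx : x ∈ S i) (k : Fin r) : stepFamily S v k x = v i k := by
  rw [stepFamily, sum_eq_single i
    (fun j _ hji => Set.indicator_of_notMem (Set.disjoint_left.1 (hS hji.symm) hx) _)
    (by simp), Set.indicator_of_mem hx]

lemma measurable_stepFamily (hS : ∀ i, MeasurableSet (S i)) (k : Fin r) :
    Measurable (stepFamily S v k) :=
  Finset.measurable_sum _ fun i _ => measurable_const.indicator (hS i)

lemma abs_stepFamily_le (k : Fin r) (x : ℝ) : |stepFamily S v k x| ≤ ∑ i, |v i k| :=
  (abs_sum_le_sum_abs _ _).trans <| sum_le_sum fun i _ => by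
    simpa only [Real.norm_eq_abs] using norm_indicator_le_norm_self (fun _ => v i k) x

lemma mixedMoment_stepFamily (hS : IsMeasurablePartition S I01) (α : Fin r → ℕ) :
    mixedMoment (stepFamily S v) α = ∑ i, volume.real (S i) * ∏ k, v i k ^ α k := by
  obtain ⟨hSm, hSd, hSU⟩ := hS
  have hint : IntegrableOn (fun y => ∏ k, stepFamily S v k y ^ α k) I01 :=
    integrable_prod_pow (measurable_stepFamily v hSm) (abs_stepFamily_le v) α
  rw [mixedMoment, ← hSU,
    integral_iUnion_fintype hSm hSd fun i => hint.mono_set (hSU ▸ Set.subset_iUnion S i)]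
  refine sum_congr rfl fun i _ => ?_
  rw [setIntegral_congr_fun (g := fun _ => ∏ k, v i k ^ α k) (hSm i)
      fun y hy => by simp only [stepFamily_of_mem v hSd hy],
    setIntegral_const, smul_eq_mul]

end StepFamily

lemma exists_stepFamily_mixedMoment_eq {r : ℕ} {u : Fin r → ℝ → ℝ} (hum : ∀ k, Measurable (u k))
    {C : Fin r → ℝ} (hC : ∀ k x, |u k x| ≤ C k) (A : Finset (Fin r → ℕ)) :
    ∃ (N : ℕ) (S : Fin N → Set ℝ) (v : Fin N → Fin r → ℝ),
      IsMeasurablePartition S I01 ∧ ∀ α ∈ A, mixedMoment (stepFamily S v) α = mixedMoment u α := by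
  set ψ : (Fin r → ℝ) → A → ℝ := fun z α => ∏ k, z k ^ α.1 k
  have hK : IsCompact (ψ '' Set.univ.pi fun k => Set.Icc (-C k) (C k)) :=
    (isCompact_univ_pi fun k => isCompact_Icc).image (by fun_prop)
  have hmem := integral_mem_convexHull (μ := volume.restrict I01) hK
    (f := fun x => ψ fun k => u k x)
    ((show Continuous ψ by fun_prop).measurable.comp
      (measurable_pi_lambda _ hum)).aestronglyMeasurable
    fun x => Set.mem_image_of_mem ψ fun k _ => abs_le.1 (hC k x)
  obtain ⟨w, hw, z, hz, hsum⟩ := exists_stdSimplex_sum_smul_eq_of_mem_convexHull hmem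
  choose v _ hv using hz
  obtain ⟨S, hS, hSvol⟩ := exists_measurablePartition_Icc _ 0 hw.1
  rw [zero_add, hw.2] at hS
  refine ⟨_, S, v, hS, fun α hα => ?_⟩
  have hα := congrFun hsum ⟨α, hα⟩
  rw [Finset.sum_apply, eval_integral fun β => integrable_prod_pow hum hC _] at hα
  rw [mixedMoment_stepFamily v hS, mixedMoment, ← hα]
  refine sum_congr rfl fun i _ => ?_
  rw [Measure.real, hSvol, ENNReal.toReal_ofReal (hw.1 i), Pi.smul_apply, ← hv, smul_eq_mul]

section RankKernel

variable {r : ℕ} (lam : Fin r → ℝ) {u : Fin r → ℝ → ℝ}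

lemma memW_rankKernel (hum : ∀ k, Measurable (u k)) (hub : ∀ k, ∃ C, ∀ x, |u k x| ≤ C) :
    memW (rankKernel lam u) := by
  choose C hC using hub
  have hC0 (k) : 0 ≤ C k := (abs_nonneg _).trans (hC k 0)
  refine ⟨by unfold rankKernel; fun_prop, fun x _ y _ => sum_congr rfl fun k _ => by ring,
    ∑ k, |lam k| * C k * C k, fun x _ y _ => ?_⟩
  refine (abs_sum_le_sum_abs _ _).trans (sum_le_sum fun k _ => ?_)
  rw [abs_mul, abs_mul]
  gcongr
  · exact mul_nonneg (abs_nonneg _) (hC0 k)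
  · exact hC k x
  · exact hC k y

lemma isStepfunction_rankKernel_stepFamily {N : ℕ} {S : Fin N → Set ℝ}
    (v : Fin N → Fin r → ℝ) (hS : IsMeasurablePartition S I01) :
    IsStepfunction (rankKernel lam (stepFamily S v)) := by
  obtain ⟨hSm, hSd, hSU⟩ := hS
  refine ⟨N, S, hSm, hSd, hSU, fun i j =>
    ⟨∑ k, lam k * v i k * v j k, ?_⟩⟩
  refine (ae_restrict_iff' ((hSm i).prod (hSm j))).2 (ae_of_all _ fun q hq => ?_)
  simp only [rankKernel, stepFamily_of_mem v hSd hq.1, stepFamily_of_mem v hSd hq.2]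

end RankKernel

theorem statement18_general (W : ℝ → ℝ → ℝ)
    (r : ℕ) (lam : Fin r → ℝ) (w : Fin r → ℝ → ℝ)
    (hwm : ∀ k, Measurable (w k)) (hwb : ∀ k, ∃ C : ℝ, ∀ x, |w k x| ≤ C)
    (hrank : ∀ᵐ q : ℝ × ℝ ∂(volume.restrict (I01 ×ˢ I01)),
      W q.1 q.2 = ∑ k, lam k * w k q.1 * w k q.2)
    (m : ℕ) (nn : Fin m → ℕ) (F : ∀ j, SimpleGraph (Fin (nn j))) :
    ∃ U : ℝ → ℝ → ℝ, memW U ∧ IsStepfunction U ∧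
      ∀ j, homDensity (F j) U = homDensity (F j) W := by
  choose C hC using hwb
  obtain ⟨N, S, v, hS, hmoment⟩ := exists_stepFamily_mixedMoment_eq hwm hC
    (univ.biUnion fun j => univ.biUnion fun c : edgePairs (F j) → Fin r =>
      univ.image (colorDegree (F j) c))
  have hvm := measurable_stepFamily v hS.1
  refine ⟨rankKernel lam (stepFamily S v),
    memW_rankKernel lam hvm fun k => ⟨_, abs_stepFamily_le v k⟩,
    isStepfunction_rankKernel_stepFamily lam v hS, fun j => ?_⟩
  rw [homDensity_congr_ae (F j) (V := rankKernel lam w) hrank,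
    homDensity_rankKernel _ _ hvm (abs_stepFamily_le v), homDensity_rankKernel _ _ hwm hC]
  refine sum_congr rfl fun c _ => congrArg _ (prod_congr rfl fun x _ => hmoment _ ?_)
  simp only [mem_biUnion, mem_image, mem_univ, true_and]
  exact ⟨j, c, x, rfl⟩

/-- if `W ∈ 𝒲` has finite rank, i.e. `W(x,y) = Σ_k λ_k w_k(x) w_k(y)`
a.e. on `[0,1]²` with bounded measurable `w_k`, then for every finite list of graphs
there is a stepfunction with the same densities as `W`. -/
theorem statement18 (W : ℝ → ℝ → ℝ) (hW : memW W)
    (r : ℕ) (lam : Fin r → ℝ) (w : Fin r → ℝ → ℝ)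
    (hwm : ∀ k, Measurable (w k)) (hwb : ∀ k, ∃ C : ℝ, ∀ x, |w k x| ≤ C)
    (hrank : ∀ᵐ q : ℝ × ℝ ∂(volume.restrict (I01 ×ˢ I01)),
      W q.1 q.2 = ∑ k, lam k * w k q.1 * w k q.2)
    (m : ℕ) (nn : Fin m → ℕ) (F : ∀ j, SimpleGraph (Fin (nn j))) :
    ∃ U : ℝ → ℝ → ℝ, memW U ∧ IsStepfunction U ∧
      ∀ j, homDensity (F j) U = homDensity (F j) W :=
  statement18_general W r lam w hwm hwb hrank m nn F
end
end
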